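/- arXiv:2010.07677 — 6 statements merged into one kernel-verified Lean document; each statement's English description precedes it below -/
import Mathlib

section
/- For 1 < t < 2 there exist constants c, C > 0 such that for all x, y ∈ ℝ^n: c (1+|x|^2+|y|^2)^{(1-t)/2} |x-y| ≤ |V_t(x) - V_t(y)| ≤ C (1+|x|^2+|y|^2)^{(1-t)/2} |x-y|. -/
/-!
Put `p = (1 - t) / 2 ∈ (-1/2, 0)`, and for `‖y‖ ≤ ‖x‖` let `a = (1 + ‖x‖²)^p ≤ b = (1 + ‖y‖²)^p`.
The identity `‖a x - b y‖² = (a‖x‖ - b‖y‖)² + ab (‖x - y‖² - (‖x‖ - ‖y‖)²)` splits the difference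
into a radial part and an angular part. The radial profile `s ↦ (1 + s²)^p s` has derivative
`(1 + s²)^(p-1) (1 + (1 + 2p) s²) ≥ (1 + 2p)(1 + s²)^p`, so by the mean value theorem the radial part
is at least `(1 + 2p) a (‖x‖ - ‖y‖)`; together with `ab ≥ a²` this gives
`‖V x - V y‖ ≥ (1 + 2p) a ‖x - y‖`. Since the profile is increasing, `(b - a)‖y‖ ≤ a (‖x‖ - ‖y‖)`,
whence `‖V x - V y‖ ≤ a ‖x - y‖ + (b - a)‖y‖ ≤ 2a ‖x - y‖`. Finally `a` and
`(1 + ‖x‖² + ‖y‖²)^p` agree up to a factor `2`.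
-/

open Real Set

lemma antitoneOn_one_add_sq_rpow {p : ℝ} (hp : p ≤ 0) :
    AntitoneOn (fun s : ℝ => (1 + s ^ 2) ^ p) (Ici 0) := fun v hv _ _ hvu =>
  rpow_le_rpow_of_nonpos (by positivity) (by gcongr) hp

lemma rpow_le_two_mul_add_rpow {p A B : ℝ} (hp1 : -1 ≤ p) (hp0 : p ≤ 0) (hA : 0 < A)
    (hB : 0 ≤ B) (hBA : B ≤ A) : A ^ p ≤ 2 * (A + B) ^ p := by
  have h2 : (2 : ℝ)⁻¹ ≤ 2 ^ p := by
    simpa only [rpow_neg_one] using rpow_le_rpow_of_exponent_le (x := 2) (by norm_num) hp1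
  calc A ^ p = 2 * (2⁻¹ * A ^ p) := by ring
    _ ≤ 2 * (2 ^ p * A ^ p) := by gcongr
    _ = 2 * (2 * A) ^ p := by rw [mul_rpow (by norm_num) hA.le]
    _ ≤ 2 * (A + B) ^ p := by
        gcongr 2 * ?_
        exact rpow_le_rpow_of_nonpos (by positivity) (by linarith) hp0

lemma hasDerivAt_one_add_sq_rpow_mul (p s : ℝ) :
    HasDerivAt (fun s : ℝ => (1 + s ^ 2) ^ p * s)
      ((1 + s ^ 2) ^ (p - 1) * (1 + (1 + 2 * p) * s ^ 2)) s := by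
  have hpos : (1 : ℝ) + s ^ 2 ≠ 0 := by positivity
  have h := ((hasDerivAt_pow 2 s).const_add 1).rpow_const (p := p) (Or.inl hpos)
  refine (h.mul (hasDerivAt_id' s)).congr_deriv ?_
  rw [rpow_sub_one hpos]
  field_simp
  ring

lemma le_one_add_sq_rpow_mul_sub {p u v : ℝ} (hp1 : -1 / 2 ≤ p) (hp0 : p ≤ 0)
    (hv : 0 ≤ v) (hvu : v ≤ u) :
    (1 + 2 * p) * (1 + u ^ 2) ^ p * (u - v) ≤ (1 + u ^ 2) ^ p * u - (1 + v ^ 2) ^ p * v := by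
  have hderiv := hasDerivAt_one_add_sq_rpow_mul p
  refine (convex_Icc v u).mul_sub_le_image_sub_of_le_deriv
    (fun s _ => (hderiv s).continuousAt.continuousWithinAt)
    (fun s _ => (hderiv s).differentiableAt.differentiableWithinAt)
    (fun s hs => ?_) v (left_mem_Icc.2 hvu) u (right_mem_Icc.2 hvu) hvu
  rw [interior_Icc] at hs
  have hs0 : 0 < 1 + s ^ 2 := by positivity
  have hsplit : (1 + s ^ 2) ^ p = (1 + s ^ 2) ^ (p - 1) * (1 + s ^ 2) := by
    rw [rpow_sub_one hs0.ne']; field_simp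
  calc (1 + 2 * p) * (1 + u ^ 2) ^ p
      ≤ (1 + 2 * p) * (1 + s ^ 2) ^ p := by
        refine mul_le_mul_of_nonneg_left ?_ (by linarith)
        exact antitoneOn_one_add_sq_rpow hp0 (hv.trans hs.1.le) (hv.trans hvu) hs.2.le
    _ ≤ (1 + s ^ 2) ^ (p - 1) * (1 + (1 + 2 * p) * s ^ 2) := by
        rw [hsplit]; nlinarith [rpow_pos_of_pos hs0 (p - 1)]
    _ = deriv (fun s : ℝ => (1 + s ^ 2) ^ p * s) s := (hderiv s).deriv.symm

lemma norm_smul_sub_smul_le {E : Type*} [SeminormedAddCommGroup E] [NormedSpace ℝ E]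
    {a b : ℝ} {x y : E} (ha : 0 ≤ a) (hab : a ≤ b) (h : b * ‖y‖ ≤ a * ‖x‖) :
    ‖a • x - b • y‖ ≤ 2 * a * ‖x - y‖ := by
  have hrev : ‖x‖ - ‖y‖ ≤ ‖x - y‖ := norm_sub_norm_le x y
  calc ‖a • x - b • y‖ = ‖a • (x - y) - (b - a) • y‖ := by
        rw [smul_sub, sub_smul]; abel_nf
    _ ≤ a * ‖x - y‖ + (b - a) * ‖y‖ := by
        refine (norm_sub_le _ _).trans ?_
        rw [norm_smul, norm_smul, norm_of_nonneg ha, norm_of_nonneg (sub_nonneg.2 hab)]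
    _ ≤ 2 * a * ‖x - y‖ := by nlinarith

/-- `vPotential p` is the paper's `V_t` for `p = (1 - t) / 2`. -/
noncomputable def vPotential {E : Type*} [SeminormedAddCommGroup E] [NormedSpace ℝ E]
    (p : ℝ) (x : E) : E :=
  (1 + ‖x‖ ^ 2) ^ p • x

section InnerProductSpace

variable {E : Type*} [NormedAddCommGroup E] [InnerProductSpace ℝ E]

lemma norm_smul_sub_smul_sq (a b : ℝ) (x y : E) :
    ‖a • x - b • y‖ ^ 2 =
      (a * ‖x‖ - b * ‖y‖) ^ 2 + a * b * (‖x - y‖ ^ 2 - (‖x‖ - ‖y‖) ^ 2) := by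
  rw [norm_sub_sq_real, norm_sub_sq_real, norm_smul, norm_smul, real_inner_smul_left,
    real_inner_smul_right, norm_eq_abs, norm_eq_abs, mul_pow, mul_pow, sq_abs, sq_abs]
  ring

lemma le_norm_smul_sub_smul {a b c : ℝ} {x y : E} (ha : 0 ≤ a) (hab : a ≤ b) (hc0 : 0 ≤ c)
    (hc1 : c ≤ 1) (hxy : ‖y‖ ≤ ‖x‖) (h : c * a * (‖x‖ - ‖y‖) ≤ a * ‖x‖ - b * ‖y‖) :
    c * a * ‖x - y‖ ≤ ‖a • x - b • y‖ := by
  have hrev : (‖x‖ - ‖y‖) ^ 2 ≤ ‖x - y‖ ^ 2 :=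
    pow_le_pow_left₀ (sub_nonneg.2 hxy) (norm_sub_norm_le x y) 2
  have hradial : (c * a * (‖x‖ - ‖y‖)) ^ 2 ≤ (a * ‖x‖ - b * ‖y‖) ^ 2 :=
    pow_le_pow_left₀ (by have := sub_nonneg.2 hxy; positivity) h 2
  have hweight : c ^ 2 * a ^ 2 ≤ a * b :=
    calc c ^ 2 * a ^ 2 ≤ 1 * (a * a) := by rw [sq a]; gcongr; nlinarith
      _ ≤ a * b := by rw [one_mul]; exact mul_le_mul_of_nonneg_left hab ha
  have hsq : (c * a * ‖x - y‖) ^ 2 ≤ ‖a • x - b • y‖ ^ 2 := by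
    rw [norm_smul_sub_smul_sq]
    nlinarith [mul_le_mul_of_nonneg_right hweight (sub_nonneg.2 hrev)]
  exact (pow_le_pow_iff_left₀ (by positivity) (norm_nonneg _) two_ne_zero).1 hsq

variable {p : ℝ}

lemma vPotential_sub_equiv_of_norm_le (hp1 : -1 / 2 ≤ p) (hp0 : p ≤ 0) {x y : E}
    (hxy : ‖y‖ ≤ ‖x‖) :
    (1 + 2 * p) * (1 + ‖x‖ ^ 2) ^ p * ‖x - y‖ ≤ ‖vPotential p x - vPotential p y‖ ∧
      ‖vPotential p x - vPotential p y‖ ≤ 2 * (1 + ‖x‖ ^ 2) ^ p * ‖x - y‖ := by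
  have ha : 0 ≤ (1 + ‖x‖ ^ 2) ^ p := by positivity
  have hab := antitoneOn_one_add_sq_rpow hp0 (norm_nonneg y) (norm_nonneg x) hxy
  have hradial := le_one_add_sq_rpow_mul_sub hp1 hp0 (norm_nonneg y) hxy
  have hmono : (1 + ‖y‖ ^ 2) ^ p * ‖y‖ ≤ (1 + ‖x‖ ^ 2) ^ p * ‖x‖ := by
    have hc : 0 ≤ 1 + 2 * p := by linarith
    have hd := sub_nonneg.2 hxy
    linarith [mul_nonneg (mul_nonneg hc ha) hd]
  exact ⟨le_norm_smul_sub_smul ha hab (by linarith) (by linarith) hxy hradial,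
    norm_smul_sub_smul_le ha hab hmono⟩

lemma vPotential_sub_equiv (hp1 : -1 / 2 ≤ p) (hp0 : p ≤ 0) (x y : E) :
    (1 + 2 * p) * (1 + ‖x‖ ^ 2 + ‖y‖ ^ 2) ^ p * ‖x - y‖ ≤
        ‖vPotential p x - vPotential p y‖ ∧
      ‖vPotential p x - vPotential p y‖ ≤ 4 * (1 + ‖x‖ ^ 2 + ‖y‖ ^ 2) ^ p * ‖x - y‖ := by
  wlog hxy : ‖y‖ ≤ ‖x‖ generalizing x y
  · rw [norm_sub_rev x y, norm_sub_rev (vPotential p x), add_right_comm]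
    exact this y x (le_of_not_ge hxy)
  obtain ⟨hlower, hupper⟩ := vPotential_sub_equiv_of_norm_le hp1 hp0 hxy
  have hle : (1 + ‖x‖ ^ 2 + ‖y‖ ^ 2) ^ p ≤ (1 + ‖x‖ ^ 2) ^ p :=
    rpow_le_rpow_of_nonpos (by positivity) (by linarith [sq_nonneg ‖y‖]) hp0
  have hge : (1 + ‖x‖ ^ 2) ^ p ≤ 2 * (1 + ‖x‖ ^ 2 + ‖y‖ ^ 2) ^ p :=
    rpow_le_two_mul_add_rpow (by linarith) hp0 (by positivity) (by positivity)
      (by nlinarith [norm_nonneg y])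
  constructor
  · refine le_trans ?_ hlower
    gcongr
    linarith
  · refine hupper.trans ?_
    rw [show (4 : ℝ) = 2 * 2 by norm_num, mul_assoc 2 2]
    gcongr

end InnerProductSpace

/-- Property (V1): for `1 < t < 2` the finite differences of the V-potential satisfy
`|V_t x − V_t y| ∼ (1+|x|²+|y|²)^((1−t)/2) |x−y|` with uniform constants. -/
theorem vpotential_difference_equiv {n : ℕ} {t : ℝ} (ht1 : 1 < t) (ht2 : t < 2) :
    ∃ c C : ℝ, 0 < c ∧ 0 < C ∧ ∀ x y : EuclideanSpace ℝ (Fin n),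
      c * (((1 : ℝ) + ‖x‖ ^ 2 + ‖y‖ ^ 2) ^ ((1 - t) / 2)) * ‖x - y‖ ≤
        ‖(((1 : ℝ) + ‖x‖ ^ 2) ^ ((1 - t) / 2)) • x -
          (((1 : ℝ) + ‖y‖ ^ 2) ^ ((1 - t) / 2)) • y‖ ∧
      ‖(((1 : ℝ) + ‖x‖ ^ 2) ^ ((1 - t) / 2)) • x -
          (((1 : ℝ) + ‖y‖ ^ 2) ^ ((1 - t) / 2)) • y‖ ≤
        C * (((1 : ℝ) + ‖x‖ ^ 2 + ‖y‖ ^ 2) ^ ((1 - t) / 2)) * ‖x - y‖ :=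
  ⟨1 + 2 * ((1 - t) / 2), 4, by linarith, by norm_num,
    vPotential_sub_equiv (by linarith) (by linarith)⟩
end

section
/- Let 1 < t < 2 and 1 < a. There is a constant C > 0 such that for all x, y ∈ ℝ^n: |V_t(x) - V_t(y)|^2 / (1+|x|^2+|y|^2)^{(2(1-t)+a)/2} ≤ C |x - y|^2 / (1+|x|^2+|y|^2)^{a/2}. -/
/-!
With `w(r) = (1 + r²)^(-β)`, `β = (t - 1)/2 ∈ (0, 1/2)` and `‖y‖ ≤ ‖x‖`, write
`V x - V y = w(‖x‖) (x - y) - (w(‖y‖) - w(‖x‖)) y`. The correction term is at most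
`2 w(‖x‖) ‖x - y‖`: if `2‖y‖ ≤ ‖x‖` then `‖x - y‖ ≥ ‖x‖/2` and `‖y‖ w(‖y‖) ≤ ‖x‖ w(‖x‖)`, because
`r w(r) = r^(1-2β) (r²/(1+r²))^β` is nondecreasing; otherwise Bernoulli's inequality gives
`w(‖y‖)/w(‖x‖) - 1 ≤ β (‖x‖² - ‖y‖²)/(1 + ‖y‖²) ≤ 3β ‖x - y‖/‖y‖`. Since
`1 + ‖x‖² ≥ (1 + ‖x‖² + ‖y‖²)/2`, squaring `‖V x - V y‖ ≤ 3 w(‖x‖) ‖x - y‖` gives the claim.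
-/

open Real

theorem rpow_neg_le_rpow_neg_mul_one_add {β A B : ℝ} (hβ₀ : 0 ≤ β) (hβ₁ : β ≤ 1)
    (hA : 0 < A) (hB : 0 < B) :
    A ^ (-β) ≤ B ^ (-β) * (1 + β * ((B - A) / A)) := by
  have hratio : A ^ (-β) = B ^ (-β) * (1 + (B / A - 1)) ^ β := by
    rw [add_sub_cancel, div_rpow hB.le hA.le, rpow_neg hA.le, rpow_neg hB.le]
    field_simp [(rpow_pos_of_pos hB β).ne']
  have hbernoulli : (1 + (B / A - 1)) ^ β ≤ 1 + β * (B / A - 1) :=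
    rpow_one_add_le_one_add_mul_self (by linarith [div_pos hB hA]) hβ₀ hβ₁
  rw [hratio, ← div_sub_one hA.ne']
  exact mul_le_mul_of_nonneg_left hbernoulli (rpow_nonneg hB.le _)

theorem monotoneOn_mul_one_add_sq_rpow_neg {β : ℝ} (hβ₀ : 0 ≤ β) (hβ : β ≤ 1 / 2) :
    MonotoneOn (fun r : ℝ => r * (1 + r ^ 2) ^ (-β)) (Set.Ici 0) := by
  intro r hr s hs hrs
  simp only [Set.mem_Ici] at hr hs
  rcases hr.eq_or_lt with rfl | hr
  · simpa using mul_nonneg hs (rpow_nonneg (by positivity) (-β))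
  have hfactor : ∀ u : ℝ, 0 < u →
      u * (1 + u ^ 2) ^ (-β) = u ^ (1 - 2 * β) * (u ^ 2 / (1 + u ^ 2)) ^ β := by
    intro u hu
    rw [div_rpow (by positivity) (by positivity), ← rpow_natCast u 2, ← rpow_mul hu.le,
      div_eq_mul_inv, ← mul_assoc, ← rpow_add hu, ← rpow_neg (by positivity)]
    norm_num
  simp only [hfactor r hr, hfactor s (hr.trans_le hrs)]
  have hfrac : r ^ 2 / (1 + r ^ 2) ≤ s ^ 2 / (1 + s ^ 2) := by
    rw [div_le_div_iff₀ (by positivity) (by positivity)]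
    nlinarith
  exact mul_le_mul (rpow_le_rpow hr.le hrs (by linarith))
    (rpow_le_rpow (by positivity) hfrac hβ₀) (by positivity) (by positivity)

theorem one_add_sq_rpow_neg_sub_mul_le {β X Y d : ℝ} (hβ₀ : 0 ≤ β) (hβ : β ≤ 1 / 2)
    (hY : 0 ≤ Y) (hYX : Y ≤ X) (hd : X - Y ≤ d) :
    ((1 + Y ^ 2) ^ (-β) - (1 + X ^ 2) ^ (-β)) * Y ≤ 2 * (1 + X ^ 2) ^ (-β) * d := by
  have hd₀ : 0 ≤ d := by linarith
  have hP : 0 ≤ (1 + X ^ 2) ^ (-β) := rpow_nonneg (by positivity) _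
  rcases le_total (2 * Y) X with hfar | hnear
  · have hmono := monotoneOn_mul_one_add_sq_rpow_neg hβ₀ hβ (Set.mem_Ici.2 hY)
      (Set.mem_Ici.2 (hY.trans hYX)) hYX
    calc ((1 + Y ^ 2) ^ (-β) - (1 + X ^ 2) ^ (-β)) * Y
        ≤ Y * (1 + Y ^ 2) ^ (-β) := by nlinarith
      _ ≤ X * (1 + X ^ 2) ^ (-β) := hmono
      _ ≤ 2 * (1 + X ^ 2) ^ (-β) * d := by nlinarith
  · have hbern := rpow_neg_le_rpow_neg_mul_one_add hβ₀ (by linarith)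
      (by positivity : (0 : ℝ) < 1 + Y ^ 2) (by positivity : (0 : ℝ) < 1 + X ^ 2)
    have hq₀ : 0 ≤ (1 + X ^ 2 - (1 + Y ^ 2)) / (1 + Y ^ 2) * Y :=
      mul_nonneg (div_nonneg (by nlinarith) (by positivity)) hY
    have hq : (1 + X ^ 2 - (1 + Y ^ 2)) / (1 + Y ^ 2) * Y ≤ 3 * d := by
      rw [div_mul_eq_mul_div, div_le_iff₀ (by positivity)]
      calc (1 + X ^ 2 - (1 + Y ^ 2)) * Y = (X + Y) * Y * (X - Y) := by ring
        _ ≤ (3 * Y) * Y * d := by gcongr; linarith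
        _ ≤ 3 * d * (1 + Y ^ 2) := by nlinarith
    calc ((1 + Y ^ 2) ^ (-β) - (1 + X ^ 2) ^ (-β)) * Y
        ≤ (1 + X ^ 2) ^ (-β) * β * ((1 + X ^ 2 - (1 + Y ^ 2)) / (1 + Y ^ 2) * Y) := by
          nlinarith
      _ ≤ (1 + X ^ 2) ^ (-β) * (1 / 2) * (3 * d) := by gcongr
      _ ≤ 2 * (1 + X ^ 2) ^ (-β) * d := by nlinarith

section

variable {E : Type*} [NormedAddCommGroup E] [NormedSpace ℝ E]

-- `V_t = vMap ((t - 1) / 2)`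
noncomputable def vMap (β : ℝ) (x : E) : E := (1 + ‖x‖ ^ 2) ^ (-β) • x

theorem norm_vMap_sub_vMap_le_of_norm_le {β : ℝ} (hβ₀ : 0 ≤ β) (hβ : β ≤ 1 / 2) {x y : E}
    (h : ‖y‖ ≤ ‖x‖) :
    ‖vMap β x - vMap β y‖ ≤ 3 * (1 + ‖x‖ ^ 2) ^ (-β) * ‖x - y‖ := by
  have hcorrection :=
    one_add_sq_rpow_neg_sub_mul_le hβ₀ hβ (norm_nonneg y) h (norm_sub_norm_le x y)
  set P := (1 + ‖x‖ ^ 2) ^ (-β)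
  set Q := (1 + ‖y‖ ^ 2) ^ (-β)
  have hP : 0 < P := rpow_pos_of_pos (by positivity) _
  have hPQ : P ≤ Q := rpow_le_rpow_of_nonpos (by positivity)
    (by gcongr) (by linarith)
  have hsplit : vMap β x - vMap β y = P • (x - y) - (Q - P) • y := by
    simp only [vMap, smul_sub, sub_smul]; abel
  calc ‖vMap β x - vMap β y‖ ≤ ‖P • (x - y)‖ + ‖(Q - P) • y‖ := hsplit ▸ norm_sub_le _ _
    _ = P * ‖x - y‖ + (Q - P) * ‖y‖ := by
      rw [norm_smul, norm_smul, Real.norm_of_nonneg hP.le, Real.norm_of_nonneg (by linarith)]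
    _ ≤ P * ‖x - y‖ + 2 * P * ‖x - y‖ := by linarith
    _ = 3 * P * ‖x - y‖ := by ring

theorem norm_vMap_sub_vMap_le {β : ℝ} (hβ₀ : 0 ≤ β) (hβ : β ≤ 1 / 2) (x y : E) :
    ‖vMap β x - vMap β y‖ ≤ 3 * 2 ^ β * (1 + ‖x‖ ^ 2 + ‖y‖ ^ 2) ^ (-β) * ‖x - y‖ := by
  wlog h : ‖y‖ ≤ ‖x‖ generalizing x y
  · rw [norm_sub_rev, norm_sub_rev x, add_right_comm]
    exact this y x (le_of_not_ge h)
  set D := 1 + ‖x‖ ^ 2 + ‖y‖ ^ 2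
  have hD : D / 2 ≤ 1 + ‖x‖ ^ 2 := by
    have : ‖y‖ ^ 2 ≤ ‖x‖ ^ 2 := by gcongr
    linarith
  have hweight : (1 + ‖x‖ ^ 2) ^ (-β) ≤ 2 ^ β * D ^ (-β) := by
    calc (1 + ‖x‖ ^ 2) ^ (-β) ≤ (D / 2) ^ (-β) :=
          rpow_le_rpow_of_nonpos (by positivity) hD (by linarith)
      _ = 2 ^ β * D ^ (-β) := by
          rw [div_rpow (by positivity) (by norm_num), rpow_neg (by norm_num : (0 : ℝ) ≤ 2),
            div_inv_eq_mul, mul_comm]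
  calc ‖vMap β x - vMap β y‖ ≤ 3 * (1 + ‖x‖ ^ 2) ^ (-β) * ‖x - y‖ :=
        norm_vMap_sub_vMap_le_of_norm_le hβ₀ hβ h
    _ ≤ 3 * (2 ^ β * D ^ (-β)) * ‖x - y‖ := by gcongr
    _ = 3 * 2 ^ β * D ^ (-β) * ‖x - y‖ := by ring

end

theorem vpotential_weighted_bound_general {n : ℕ} {t a : ℝ} (ht1 : 1 < t) (ht2 : t < 2) :
    ∃ C : ℝ, 0 < C ∧ ∀ x y : EuclideanSpace ℝ (Fin n),
      ‖(((1 : ℝ) + ‖x‖ ^ 2) ^ ((1 - t) / 2)) • x -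
          (((1 : ℝ) + ‖y‖ ^ 2) ^ ((1 - t) / 2)) • y‖ ^ 2 /
        (((1 : ℝ) + ‖x‖ ^ 2 + ‖y‖ ^ 2) ^ ((2 * (1 - t) + a) / 2)) ≤
      C * (‖x - y‖ ^ 2 / (((1 : ℝ) + ‖x‖ ^ 2 + ‖y‖ ^ 2) ^ (a / 2))) := by
  set β := (t - 1) / 2 with hβ
  refine ⟨(3 * 2 ^ β) ^ 2, by positivity, fun x y => ?_⟩
  set D := 1 + ‖x‖ ^ 2 + ‖y‖ ^ 2
  have hD : 0 < D := by positivity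
  have hV := norm_vMap_sub_vMap_le (β := β) (by linarith) (by linarith) x y
  have hweight : D ^ ((2 * (1 - t) + a) / 2) = (D ^ (-β)) ^ 2 * D ^ (a / 2) := by
    rw [← rpow_natCast, ← rpow_mul hD.le, ← rpow_add hD, hβ]
    ring_nf
  rw [show (1 - t) / 2 = -β by ring, hweight, div_le_iff₀ (by positivity)]
  calc ‖vMap β x - vMap β y‖ ^ 2 ≤ (3 * 2 ^ β * D ^ (-β) * ‖x - y‖) ^ 2 := by gcongr
    _ = (3 * 2 ^ β) ^ 2 * (‖x - y‖ ^ 2 / D ^ (a / 2)) * ((D ^ (-β)) ^ 2 * D ^ (a / 2)) := by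
      field_simp

/-- Property (V4): for `1 < t < 2` and `a > 1` there is `C > 0` such that
`|V_t x − V_t y|² / (1+|x|²+|y|²)^((2(1−t)+a)/2) ≤ C |x−y|² / (1+|x|²+|y|²)^(a/2)`. -/
theorem vpotential_weighted_bound {n : ℕ} {t a : ℝ} (ht1 : 1 < t) (ht2 : t < 2)
    (ha : 1 < a) :
    ∃ C : ℝ, 0 < C ∧ ∀ x y : EuclideanSpace ℝ (Fin n),
      ‖(((1 : ℝ) + ‖x‖ ^ 2) ^ ((1 - t) / 2)) • x -
          (((1 : ℝ) + ‖y‖ ^ 2) ^ ((1 - t) / 2)) • y‖ ^ 2 /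
        (((1 : ℝ) + ‖x‖ ^ 2 + ‖y‖ ^ 2) ^ ((2 * (1 - t) + a) / 2)) ≤
      C * (‖x - y‖ ^ 2 / (((1 : ℝ) + ‖x‖ ^ 2 + ‖y‖ ^ 2) ^ (a / 2))) :=
  vpotential_weighted_bound_general ht1 ht2
end

section
/- Let f : ℝ^d → ℝ be C^2, convex, and a-elliptic with a = 1, i.e., there exists c_1 > 0 with ⟨∇²f(N)M, M⟩ ≥ c_1 |M|^2 / (1+|N|^2)^{1/2} for all M, N. If d = 1, then f is not of linear growth: there is no C > 0 with |f(z)| ≤ C(1+|z|) for all z. -/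
/-!
Ellipticity with `a = 1` gives `f'' t ≥ c₁ / √(1 + t²) ≥ c₁ / (1 + t)` for `t ≥ 0`, so
`f' t - c₁ log (1 + t)` is monotone on `[0, ∞)` and `f'` tends to `+∞`. On the other hand, by
convexity `f' x` is at most the slope of `f` on `[x, 2x]`, which linear growth bounds by `5C` for
`x ≥ 1`.
-/

open Filter Real Set

lemma div_one_add_abs_le_of_elliptic {g : ℝ → ℝ} {c : ℝ} (hc : 0 ≤ c)
    (hell : ∀ N M : ℝ, c * M ^ 2 / ((1 + N ^ 2) ^ ((1 : ℝ) / 2)) ≤ g N * M ^ 2) (N : ℝ) :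
    c / (1 + |N|) ≤ g N := by
  have hsqrt : √(1 + N ^ 2) ≤ 1 + |N| := by
    simpa only [norm_eq_abs, sq_abs] using sqrt_one_add_norm_sq_le N
  calc c / (1 + |N|) ≤ c / √(1 + N ^ 2) :=
        div_le_div_of_nonneg_left hc (sqrt_pos.2 (by positivity)) hsqrt
    _ ≤ g N := by simpa [sqrt_eq_rpow] using hell N 1

lemma tendsto_atTop_of_div_one_add_le_deriv {g : ℝ → ℝ} {c : ℝ} (hc : 0 < c)
    (hg : Differentiable ℝ g) (hg' : ∀ t, 0 < t → c / (1 + t) ≤ deriv g t) :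
    Tendsto g atTop atTop := by
  have hder : ∀ t, 0 ≤ t →
      HasDerivAt (fun s ↦ g s - c * log (1 + s)) (deriv g t - c / (1 + t)) t := fun t ht ↦ by
    have hlog := (((hasDerivAt_id t).const_add 1).log (by simp; linarith)).const_mul c
    simpa [div_eq_mul_inv] using (hg t).hasDerivAt.fun_sub hlog
  have hmono : MonotoneOn (fun t ↦ g t - c * log (1 + t)) (Ici 0) := by
    refine monotoneOn_of_deriv_nonneg (convex_Ici 0)
      (fun t ht ↦ (hder t ht).continuousAt.continuousWithinAt) ?_ ?_ <;> rw [interior_Ici]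
    · exact fun t ht ↦ (hder t (le_of_lt ht)).differentiableAt.differentiableWithinAt
    · exact fun t ht ↦ (hder t (le_of_lt ht)).deriv ▸ sub_nonneg.2 (hg' t ht)
  have hbound : ∀ t, 0 ≤ t → g 0 + c * log (1 + t) ≤ g t := fun t ht ↦ by
    have := hmono (mem_Ici.2 le_rfl) (mem_Ici.2 ht) ht
    simp only [add_zero, log_one, mul_zero, sub_zero] at this
    linarith
  have hlog_tendsto : Tendsto (fun t ↦ g 0 + c * log (1 + t)) atTop atTop :=
    tendsto_atTop_add_const_left _ _ <| (tendsto_log_atTop.comp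
      (tendsto_atTop_add_const_left _ 1 tendsto_id)).const_mul_atTop hc
  exact tendsto_atTop_mono' _ (eventually_ge_atTop 0 |>.mono hbound) hlog_tendsto

lemma ConvexOn.deriv_le_of_abs_le_linear {f : ℝ → ℝ} {C x : ℝ} (hconv : ConvexOn ℝ univ f)
    (hd : Differentiable ℝ f) (hlin : ∀ z, |f z| ≤ C * (1 + |z|)) (hx : 1 ≤ x) :
    deriv f x ≤ 5 * C := by
  have hC : 0 ≤ C := by simpa using (abs_nonneg _).trans (hlin 0)
  have hslope := hconv.deriv_le_slope (mem_univ x) (mem_univ (2 * x)) (by linarith)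
    hd.differentiableAt
  rw [slope_def_field, show 2 * x - x = x by ring] at hslope
  have h1 := (abs_le.1 (hlin x)).1
  have h2 := (abs_le.1 (hlin (2 * x))).2
  rw [abs_of_nonneg (by linarith)] at h1 h2
  refine hslope.trans ((div_le_iff₀ (by linarith)).2 ?_)
  nlinarith

/-- A `C²` convex function on `ℝ` that is `1`-elliptic (i.e. `f''(N) M² ≥ c₁ M²/(1+N²)^(1/2)`)
cannot be of linear growth. -/
theorem one_elliptic_not_linear_growth (f : ℝ → ℝ) (hf : ContDiff ℝ 2 f)
    (hconv : ConvexOn ℝ Set.univ f) (c₁ : ℝ) (hc₁ : 0 < c₁)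
    (hell : ∀ N M : ℝ, c₁ * M ^ 2 / (((1 : ℝ) + N ^ 2) ^ ((1 : ℝ) / 2)) ≤
      deriv (deriv f) N * M ^ 2) :
    ¬ ∃ C : ℝ, 0 < C ∧ ∀ z : ℝ, |f z| ≤ C * (1 + |z|) := by
  rintro ⟨C, -, hlin⟩
  have hf' : Tendsto (deriv f) atTop atTop :=
    tendsto_atTop_of_div_one_add_le_deriv hc₁ hf.differentiable_deriv_two fun t ht ↦ by
      simpa [abs_of_pos ht] using div_one_add_abs_le_of_elliptic hc₁.le hell t
  obtain ⟨x, hx, hx1⟩ := ((hf'.eventually_gt_atTop (5 * C)).and (eventually_ge_atTop 1)).exists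
  exact hx.not_ge (hconv.deriv_le_of_abs_le_linear (hf.differentiable (by norm_num)) hlin hx1)
end

section
/- Let μ, μ_1, μ_2, ... be W-valued finite Radon measures on an open set Ω ⊂ ℝ^n taking values in a closed convex cone C ⊂ W, and let g : C → [0, ∞] be lower semicontinuous, convex, and positively 1-homogeneous. If μ_k converges weakly-* to μ, then ∫_Ω g(dμ/d|μ|) d|μ| ≤ liminf_{k→∞} ∫_Ω g(dμ_k/d|μ_k|) d|μ_k|. -/
/-!
By Hahn–Banach applied to the epigraph of `g` (a closed convex cone), `g` agrees on `C \ {0}`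
with the supremum of `(f ·)⁺` over its continuous linear minorants `f`, and by second
countability a sequence `e m` of minorants suffices. By monotone convergence it is enough to
bound `∫ max_{m ≤ M} (e m σ)⁺ dν`. Cutting `Ω` into the measurable pieces on which `e m` realises
the maximum, and approximating these from inside by disjoint compacts and then by cutoffs `φ m`
with disjoint supports, this integral is, up to `ε`, `∑ m ∫ φ m (e m σ) dν`: the limit of the same
expressions for `σ_k ν_k`. As `∑ m φ m ≤ 1` and `(e m y)⁺ ≤ g y` on `C`, each of those is at most
`∫ g(σ_k) dν_k`.
-/

open MeasureTheory Filter ENNReal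

open Set Topology

section LinearMinorants

variable {E : Type*} {C : Set E} {g : E → ℝ≥0∞}

def epigraphOn (C : Set E) (g : E → ℝ≥0∞) : Set (E × ℝ) :=
  {p | p.1 ∈ C ∧ 0 ≤ p.2 ∧ g p.1 ≤ ENNReal.ofReal p.2}

lemma mk_toReal_mem_epigraphOn {y : E} (hy : y ∈ C) (hgy : g y ≠ ⊤) :
    (y, (g y).toReal) ∈ epigraphOn C g :=
  ⟨hy, toReal_nonneg, (ofReal_toReal hgy).ge⟩

lemma isClosed_epigraphOn [TopologicalSpace E] (hC : IsClosed C) (hg : LowerSemicontinuous g) :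
    IsClosed (epigraphOn C g) := by
  have hepi : IsClosed {p : E × ℝ≥0∞ | g p.1 ≤ p.2} := hg.isClosed_epigraph
  exact (hC.preimage continuous_fst).inter ((isClosed_le continuous_const continuous_snd).inter
    (hepi.preimage (continuous_fst.prodMk (ENNReal.continuous_ofReal.comp continuous_snd))))

lemma convex_epigraphOn [AddCommGroup E] [Module ℝ E] (hC : Convex ℝ C)
    (hg : ∀ x ∈ C, ∀ y ∈ C, ∀ a b : ℝ, 0 ≤ a → 0 ≤ b → a + b = 1 →
      g (a • x + b • y) ≤ ENNReal.ofReal a * g x + ENNReal.ofReal b * g y) :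
    Convex ℝ (epigraphOn C g) := by
  rintro ⟨x, s⟩ ⟨hx, hs, hgx⟩ ⟨y, t⟩ ⟨hy, ht, hgy⟩ a b ha hb hab
  refine ⟨hC hx hy ha hb hab, add_nonneg (mul_nonneg ha hs) (mul_nonneg hb ht), ?_⟩
  calc g (a • x + b • y) ≤ ENNReal.ofReal a * g x + ENNReal.ofReal b * g y :=
        hg x hx y hy a b ha hb hab
    _ ≤ ENNReal.ofReal a * ENNReal.ofReal s + ENNReal.ofReal b * ENNReal.ofReal t := by gcongr
    _ = ENNReal.ofReal (a * s + b * t) := by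
        rw [← ofReal_mul ha, ← ofReal_mul hb, ofReal_add (by positivity) (by positivity)]

lemma smul_mem_epigraphOn [AddCommGroup E] [Module ℝ E] (hC : ∀ r : ℝ, 0 ≤ r → ∀ x ∈ C, r • x ∈ C)
    (hg : ∀ r : ℝ, 0 < r → ∀ x ∈ C, g (r • x) = ENNReal.ofReal r * g x)
    {p : E × ℝ} (hp : p ∈ epigraphOn C g) {c : ℝ} (hc : 0 < c) : c • p ∈ epigraphOn C g := by
  obtain ⟨hp₁, hp₂, hgp⟩ := hp
  refine ⟨hC c hc.le _ hp₁, mul_nonneg hc.le hp₂, ?_⟩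
  change g (c • p.1) ≤ ENNReal.ofReal (c * p.2)
  rw [hg c hc _ hp₁, ofReal_mul hc.le]
  gcongr

lemma IsClosed.zero_mem_of_smul_mem {V : Type*} [AddCommGroup V] [Module ℝ V] [TopologicalSpace V]
    [ContinuousSMul ℝ V] {S : Set V} (hS : IsClosed S) (hSne : S.Nonempty)
    (hsmul : ∀ p ∈ S, ∀ c : ℝ, 0 < c → c • p ∈ S) : (0 : V) ∈ S := by
  obtain ⟨p, hp⟩ := hSne
  have hlim : Tendsto (fun c : ℝ => c • p) (𝓝[>] 0) (𝓝 0) := by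
    simpa using (tendsto_id.smul_const p).mono_left (nhdsWithin_le_nhds (a := (0 : ℝ)))
  exact hS.mem_of_tendsto hlim (eventually_nhdsWithin_of_forall fun c hc => hsmul p hp c hc)

lemma exists_nonpos_of_notMem_closed_cone {V : Type*} [AddCommGroup V] [Module ℝ V]
    [TopologicalSpace V] [IsTopologicalAddGroup V] [ContinuousSMul ℝ V] [LocallyConvexSpace ℝ V]
    {S : Set V} (hS : IsClosed S) (hSconv : Convex ℝ S)
    (hsmul : ∀ p ∈ S, ∀ c : ℝ, 0 < c → c • p ∈ S) (h0 : (0 : V) ∈ S) {x : V} (hx : x ∉ S) :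
    ∃ F : StrongDual ℝ V, (∀ p ∈ S, F p ≤ 0) ∧ 0 < F x := by
  obtain ⟨F, u, hFS, huF⟩ := geometric_hahn_banach_closed_point hSconv hS hx
  have hu : 0 < u := by simpa using hFS 0 h0
  refine ⟨F, fun p hp => ?_, hu.trans huF⟩
  -- a functional bounded above on a cone is nonpositive on it
  by_contra! hpos
  have := hFS _ (hsmul p hp (u / F p + 1) (by positivity))
  rw [map_smul, smul_eq_mul, add_mul, div_mul_cancel₀ _ hpos.ne'] at this
  linarith

variable [NormedAddCommGroup E] [NormedSpace ℝ E]

def linearMinorants (C : Set E) (g : E → ℝ≥0∞) : Set (StrongDual ℝ E) :=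
  {f | ∀ y ∈ C, ENNReal.ofReal (f y) ≤ g y}

lemma zero_mem_linearMinorants : 0 ∈ linearMinorants C g := fun y _ => by simp

lemma mem_linearMinorants_of_le_toReal {f : StrongDual ℝ E}
    (hf : ∀ y ∈ C, g y ≠ ⊤ → f y ≤ (g y).toReal) : f ∈ linearMinorants C g := by
  intro y hy
  by_cases hgy : g y = ⊤
  · simp [hgy]
  · exact (ofReal_le_iff_le_toReal hgy).2 (hf y hy hgy)

lemma exists_mem_linearMinorants_lt_of_nonpos_on_epigraphOn {F : StrongDual ℝ (E × ℝ)}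
    (hF : ∀ p ∈ epigraphOn C g, F p ≤ 0) (hF01 : F (0, 1) ≤ 0) {x : E} {r : ℝ}
    (hFx : 0 < F (x, r)) : ∃ f ∈ linearMinorants C g, r < f x := by
  set f₁ : StrongDual ℝ E := F.comp (ContinuousLinearMap.inl ℝ E ℝ)
  set a : ℝ := -F (0, 1)
  have hFa : ∀ y s, F (y, s) = f₁ y - s * a := by
    intro y s
    have : (y, s) = (y, 0) + s • ((0 : E), (1 : ℝ)) := by simp
    rw [this, map_add, map_smul, smul_eq_mul]
    simp [f₁, a]
  have ha : 0 ≤ a := neg_nonneg.2 hF01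
  have hf₁C : ∀ y ∈ C, g y ≠ ⊤ → f₁ y ≤ (g y).toReal * a := by
    intro y hy hgy
    have := hF _ (mk_toReal_mem_epigraphOn hy hgy)
    rw [hFa] at this
    linarith
  have hf₁x : r * a < f₁ x := by
    rw [hFa] at hFx
    linarith
  have hscale : ∀ t : ℝ, 0 ≤ t → t * a ≤ 1 → r < t * f₁ x →
      ∃ f ∈ linearMinorants C g, r < f x := by
    refine fun t ht hta hrt => ⟨t • f₁, mem_linearMinorants_of_le_toReal fun y hy hgy => ?_, hrt⟩
    calc (t • f₁) y = t * f₁ y := rfl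
      _ ≤ t * ((g y).toReal * a) := mul_le_mul_of_nonneg_left (hf₁C y hy hgy) ht
      _ = (g y).toReal * (t * a) := by ring
      _ ≤ (g y).toReal := mul_le_of_le_one_right toReal_nonneg hta
  rcases ha.eq_or_lt with ha0 | ha0
  · have hx0 : 0 < f₁ x := by rw [← ha0, mul_zero] at hf₁x; exact hf₁x
    refine hscale ((|r| + 1) / f₁ x) (by positivity) (by simp [← ha0]) ?_
    rw [div_mul_cancel₀ _ hx0.ne']
    linarith [le_abs_self r]
  · refine hscale a⁻¹ (inv_nonneg.2 ha) (inv_mul_cancel₀ ha0.ne').le ?_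
    rwa [lt_inv_mul_iff₀ ha0, mul_comm]

lemma exists_mem_linearMinorants_lt_of_ne_top (hC : IsClosed C) (hCconv : Convex ℝ C)
    (hCcone : ∀ r : ℝ, 0 ≤ r → ∀ x ∈ C, r • x ∈ C) (hglsc : LowerSemicontinuous g)
    (hgconv : ∀ x ∈ C, ∀ y ∈ C, ∀ a b : ℝ, 0 ≤ a → 0 ≤ b → a + b = 1 →
      g (a • x + b • y) ≤ ENNReal.ofReal a * g x + ENNReal.ofReal b * g y)
    (hghom : ∀ r : ℝ, 0 < r → ∀ x ∈ C, g (r • x) = ENNReal.ofReal r * g x)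
    {y₀ : E} (hy₀ : y₀ ∈ C) (hgy₀ : g y₀ ≠ ⊤) {x : E} {r : ℝ}
    (hrx : ENNReal.ofReal r < g x) : ∃ f ∈ linearMinorants C g, r < f x := by
  have hS : IsClosed (epigraphOn C g) := isClosed_epigraphOn hC hglsc
  have hsmul : ∀ p ∈ epigraphOn C g, ∀ c : ℝ, 0 < c → c • p ∈ epigraphOn C g :=
    fun p hp c hc => smul_mem_epigraphOn hCcone hghom hp hc
  have h00 : (0 : E × ℝ) ∈ epigraphOn C g :=
    hS.zero_mem_of_smul_mem ⟨_, mk_toReal_mem_epigraphOn hy₀ hgy₀⟩ hsmul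
  have h01 : ((0 : E), (1 : ℝ)) ∈ epigraphOn C g :=
    ⟨h00.1, zero_le_one, h00.2.2.trans (ofReal_le_ofReal zero_le_one)⟩
  obtain ⟨F, hF, hFx⟩ := exists_nonpos_of_notMem_closed_cone hS (convex_epigraphOn hCconv hgconv)
    hsmul h00 (x := (x, r)) fun h => (h.2.2.trans_lt hrx).false
  exact exists_mem_linearMinorants_lt_of_nonpos_on_epigraphOn hF (hF _ h01) hFx

lemma exists_mem_linearMinorants_lt_of_forall_eq_top (hg : ∀ y ∈ C, g y = ⊤) {x : E}
    (hx : x ≠ 0) (r : ℝ) : ∃ f ∈ linearMinorants C g, r < f x := by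
  obtain ⟨f, -, hfx⟩ := exists_dual_vector ℝ x (norm_ne_zero_iff.2 hx)
  refine ⟨((|r| + 1) / ‖x‖) • f, fun y hy => by simp [hg y hy], ?_⟩
  rw [smul_apply, hfx, smul_eq_mul, RCLike.ofReal_real_eq_id, id,
    div_mul_cancel₀ _ (norm_ne_zero_iff.2 hx)]
  linarith [le_abs_self r]

theorem iSup_linearMinorants_eq (hC : IsClosed C) (hCconv : Convex ℝ C)
    (hCcone : ∀ r : ℝ, 0 ≤ r → ∀ x ∈ C, r • x ∈ C) (hglsc : LowerSemicontinuous g)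
    (hgconv : ∀ x ∈ C, ∀ y ∈ C, ∀ a b : ℝ, 0 ≤ a → 0 ≤ b → a + b = 1 →
      g (a • x + b • y) ≤ ENNReal.ofReal a * g x + ENNReal.ofReal b * g y)
    (hghom : ∀ r : ℝ, 0 < r → ∀ x ∈ C, g (r • x) = ENNReal.ofReal r * g x)
    {x : E} (hx : x ∈ C) (hx0 : x ≠ 0) :
    ⨆ f ∈ linearMinorants C g, ENNReal.ofReal (f x) = g x := by
  refine le_antisymm (iSup₂_le fun f hf => hf x hx) (le_of_forall_lt fun c hc => ?_)
  have hc' : c ≠ ⊤ := hc.ne_top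
  obtain ⟨f, hf, hcf⟩ : ∃ f ∈ linearMinorants C g, c.toReal < f x := by
    by_cases hfin : ∃ y ∈ C, g y ≠ ⊤
    · obtain ⟨y₀, hy₀, hgy₀⟩ := hfin
      exact exists_mem_linearMinorants_lt_of_ne_top hC hCconv hCcone hglsc hgconv hghom hy₀ hgy₀
        (by rwa [ofReal_toReal hc'])
    · push Not at hfin
      exact exists_mem_linearMinorants_lt_of_forall_eq_top hfin hx0 _
  calc c = ENNReal.ofReal c.toReal := (ofReal_toReal hc').symm
    _ < ENNReal.ofReal (f x) := (ofReal_lt_ofReal_iff_of_nonneg toReal_nonneg).2 hcf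
    _ ≤ ⨆ f ∈ linearMinorants C g, ENNReal.ofReal (f x) :=
        le_iSup₂ (f := fun f _ => ENNReal.ofReal (f x)) f hf

end LinearMinorants

lemma exists_seq_iSup_eq_biSup {Y ι : Type*} [TopologicalSpace Y] [SecondCountableTopology Y]
    {F : ι → Y → ℝ≥0∞} (hF : ∀ i, LowerSemicontinuous (F i)) {s : Set ι} (hs : s.Nonempty) :
    ∃ e : ℕ → ι, (∀ m, e m ∈ s) ∧ ∀ y, ⨆ m, F (e m) y = ⨆ i ∈ s, F i y := by
  let level : ℚ → ℝ≥0∞ := fun q => ((q : ℝ).toNNReal : ℝ≥0∞)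
  choose T hTs hTc hTU using fun q : ℚ =>
    TopologicalSpace.isOpen_biUnion_countable s (fun i => F i ⁻¹' Ioi (level q))
      fun i _ => (hF i).isOpen_preimage _
  obtain ⟨i₀, hi₀⟩ := hs
  obtain ⟨e, he⟩ := ((countable_iUnion hTc).insert i₀).exists_eq_range (insert_nonempty _ _)
  have hes : ∀ m, e m ∈ s := by
    intro m
    have hm : e m ∈ insert i₀ (⋃ q, T q) := he ▸ mem_range_self m
    rcases hm with hm | hm
    · exact hm ▸ hi₀
    · obtain ⟨q, hq⟩ := mem_iUnion.1 hm
      exact hTs q hq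
  refine ⟨e, hes, fun y => le_antisymm (iSup_le fun m => le_iSup₂_of_le (e m) (hes m) le_rfl) ?_⟩
  refine le_of_forall_lt fun c hc => ?_
  obtain ⟨q, -, hcq, hq⟩ := ENNReal.lt_iff_exists_rat_btwn.1 hc
  obtain ⟨i, hi, hqi⟩ := lt_biSup_iff.1 hq
  have hy : y ∈ ⋃ j ∈ T q, F j ⁻¹' Ioi (level q) := by rw [hTU]; exact mem_biUnion hi hqi
  obtain ⟨j, hj, hqj⟩ := mem_iUnion₂.1 hy
  obtain ⟨m, rfl⟩ : j ∈ range e := he ▸ mem_insert_of_mem _ (mem_iUnion.2 ⟨q, hj⟩)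
  exact hcq.trans (lt_of_lt_of_le hqj (le_iSup (fun m => F (e m) y) m))

lemma ofReal_integral_le_lintegral_ofReal {α : Type*} [MeasurableSpace α] {μ : Measure α}
    {f : α → ℝ} (hf : Integrable f μ) :
    ENNReal.ofReal (∫ x, f x ∂μ) ≤ ∫⁻ x, ENNReal.ofReal (f x) ∂μ :=
  calc ENNReal.ofReal (∫ x, f x ∂μ) ≤ ENNReal.ofReal (∫ x, max (f x) 0 ∂μ) :=
        ofReal_le_ofReal (integral_mono hf hf.pos_part fun x => le_max_left _ _)
    _ = ∫⁻ x, ENNReal.ofReal (max (f x) 0) ∂μ :=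
        ofReal_integral_eq_lintegral_ofReal hf.pos_part (ae_of_all _ fun x => le_max_right _ _)
    _ = ∫⁻ x, ENNReal.ofReal (f x) ∂μ := by simp [ofReal_max]

lemma ofReal_sum_mul_le {ι : Type*} {s : Finset ι} {a b : ι → ℝ} {G : ℝ≥0∞}
    (ha : ∀ m ∈ s, 0 ≤ a m) (ha1 : ∑ m ∈ s, a m ≤ 1) (hb : ∀ m ∈ s, ENNReal.ofReal (b m) ≤ G) :
    ENNReal.ofReal (∑ m ∈ s, a m * b m) ≤ G := by
  rcases eq_or_ne G ⊤ with rfl | hG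
  · exact le_top
  rw [ofReal_le_iff_le_toReal hG]
  calc ∑ m ∈ s, a m * b m ≤ ∑ m ∈ s, a m * G.toReal :=
        Finset.sum_le_sum fun m hm =>
          mul_le_mul_of_nonneg_left ((ofReal_le_iff_le_toReal hG).1 (hb m hm)) (ha m hm)
    _ = (∑ m ∈ s, a m) * G.toReal := (Finset.sum_mul ..).symm
    _ ≤ G.toReal := mul_le_of_le_one_left toReal_nonneg ha1

lemma exists_measurableSet_sup_ofReal_eq_sum_indicator {X ι : Type*} [MeasurableSpace X]
    [DecidableEq ι] (s : Finset ι) {u : ι → X → ℝ} (hu : ∀ m, Measurable (u m)) :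
    ∃ A : ι → Set X, (∀ m, MeasurableSet (A m)) ∧ (s : Set ι).PairwiseDisjoint A ∧
      ∀ x, 0 ≤ ∑ m ∈ s, (A m).indicator (u m) x ∧
        ENNReal.ofReal (∑ m ∈ s, (A m).indicator (u m) x) =
          s.sup fun m => ENNReal.ofReal (u m x) := by
  induction s using Finset.induction_on with
  | empty => exact ⟨fun _ => ∅, fun _ => MeasurableSet.empty, by simp, fun x => by simp⟩
  | insert a s ha ih =>
    obtain ⟨A, hA, hAd, hAx⟩ := ih
    set S : X → ℝ := fun x => ∑ m ∈ s, (A m).indicator (u m) x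
    -- `a` takes over where it beats the maximum over `s`
    set B := {x | S x < u a x}
    have hB : MeasurableSet B :=
      measurableSet_lt (Finset.measurable_sum s fun m _ => (hu m).indicator (hA m)) (hu a)
    have hne : ∀ m ∈ s, m ≠ a := fun m hm h => ha (h ▸ hm)
    refine ⟨fun m => if m = a then B else A m \ B, fun m => ?_, ?_, fun x => ?_⟩
    · dsimp only
      split_ifs
      exacts [hB, (hA m).diff hB]
    · rw [Finset.coe_insert, pairwiseDisjoint_insert]
      refine ⟨fun m hm l hl hml => ?_, fun l hl hal => ?_⟩
      · simp only [Function.onFun, if_neg (hne m hm), if_neg (hne l hl)]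
        exact (hAd hm hl hml).mono sdiff_subset sdiff_subset
      · rw [if_pos rfl, if_neg (hne l hl)]
        exact disjoint_sdiff_self_right
    · beta_reduce
      have hsum : ∑ m ∈ insert a s, (if m = a then B else A m \ B).indicator (u m) x =
          max (u a x) (S x) := by
        rw [Finset.sum_insert ha, if_pos rfl,
          Finset.sum_congr rfl fun m hm => by rw [if_neg (hne m hm)]]
        by_cases hx : x ∈ B
        · rw [indicator_of_mem hx, max_eq_left (le_of_lt hx), add_eq_left]
          exact Finset.sum_eq_zero fun m _ => indicator_of_notMem (fun h => h.2 hx) _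
        · have hdiff : ∀ m ∈ s, (A m \ B).indicator (u m) x = (A m).indicator (u m) x := by
            intro m _
            by_cases hxA : x ∈ A m
            · rw [indicator_of_mem (show x ∈ A m \ B from ⟨hxA, hx⟩), indicator_of_mem hxA]
            · rw [indicator_of_notMem (fun h => hxA h.1), indicator_of_notMem hxA]
          rw [indicator_of_notMem hx, zero_add, Finset.sum_congr rfl hdiff,
            max_eq_right (not_lt.1 hx)]
      rw [hsum, Finset.sup_insert, ofReal_max, (hAx x).2]
      exact ⟨le_max_of_le_right (hAx x).1, rfl⟩

lemma integral_mul_apply_eq_sum {X : Type*} [MeasurableSpace X] {μ : Measure X} {d : ℕ}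
    {φ : X → ℝ} {τ : X → Fin d → ℝ}
    (hint : ∀ i, Integrable (fun x => φ x * τ x i) μ) (f : StrongDual ℝ (Fin d → ℝ)) :
    ∫ x, φ x * f (τ x) ∂μ = ∑ i, f (Pi.single i 1) * ∫ x, φ x * τ x i ∂μ := by
  have hf : ∀ y : Fin d → ℝ, f y = ∑ i, f (Pi.single i 1) * y i := by
    intro y
    rw [show f y = f.toLinearMap y from rfl, LinearMap.pi_apply_eq_sum_univ]
    refine Finset.sum_congr rfl fun i _ => ?_
    have hsingle : (fun j => if i = j then (1 : ℝ) else 0) = Pi.single i 1 :=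
      funext fun j => by rw [Pi.single_apply]; exact if_congr eq_comm rfl rfl
    rw [hsingle, smul_eq_mul, mul_comm]
    rfl
  calc ∫ x, φ x * f (τ x) ∂μ = ∫ x, ∑ i, f (Pi.single i 1) * (φ x * τ x i) ∂μ := by
        refine integral_congr_ae (ae_of_all _ fun x => ?_)
        beta_reduce
        rw [hf (τ x), Finset.mul_sum]
        exact Finset.sum_congr rfl fun i _ => by ring
    _ = ∑ i, f (Pi.single i 1) * ∫ x, φ x * τ x i ∂μ := by
        rw [integral_finsetSum _ fun i _ => (hint i).const_mul _]
        exact Finset.sum_congr rfl fun i _ => integral_const_mul _ _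

section Subpartition

variable {X ι : Type*} [TopologicalSpace X]

structure IsSubpartitionOfUnity (Ω : Set X) (s : Finset ι) (φ : ι → X → ℝ) : Prop where
  continuous : ∀ m ∈ s, Continuous (φ m)
  hasCompactSupport : ∀ m ∈ s, HasCompactSupport (φ m)
  tsupport_subset : ∀ m ∈ s, tsupport (φ m) ⊆ Ω
  nonneg : ∀ m ∈ s, ∀ x, 0 ≤ φ m x
  sum_le_one : ∀ x, ∑ m ∈ s, φ m x ≤ 1

lemma IsSubpartitionOfUnity.of_pairwiseDisjoint {Ω : Set X} {s : Finset ι} {φ : ι → X → ℝ}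
    (hφ : ∀ m ∈ s, Continuous (φ m)) (hφc : ∀ m ∈ s, HasCompactSupport (φ m))
    (hφΩ : ∀ m ∈ s, tsupport (φ m) ⊆ Ω) (hφ01 : ∀ m ∈ s, ∀ x, φ m x ∈ Icc 0 1)
    (hd : (s : Set ι).PairwiseDisjoint fun m => Function.support (φ m)) :
    IsSubpartitionOfUnity Ω s φ where
  continuous := hφ
  hasCompactSupport := hφc
  tsupport_subset := hφΩ
  nonneg m hm x := (hφ01 m hm x).1
  sum_le_one x := by
    by_cases hx : ∃ m ∈ s, x ∈ Function.support (φ m)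
    · obtain ⟨m, hm, hxm⟩ := hx
      rw [Finset.sum_eq_single_of_mem m hm fun l hl hlm =>
        Function.notMem_support.1 fun hxl => disjoint_left.1 (hd hl hm hlm) hxl hxm]
      exact (hφ01 m hm x).2
    · push Not at hx
      simp [Finset.sum_eq_zero fun m hm => Function.notMem_support.1 (hx m hm)]

lemma abs_indicator_one_sub_le {A K : Set X} (hKA : K ⊆ A)
    {φ : X → ℝ} (hφ01 : ∀ x, φ x ∈ Icc 0 1) (hφK : EqOn φ 1 K) (x : X) :
    |A.indicator 1 x - φ x| ≤ (A \ K).indicator 1 x + (tsupport φ \ K).indicator 1 x := by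
  have hind : ∀ S : Set X, 0 ≤ S.indicator (1 : X → ℝ) x :=
    fun S => indicator_nonneg (fun _ _ => zero_le_one) x
  have h01 := hφ01 x
  by_cases hxK : x ∈ K
  · simpa [hKA hxK, hφK hxK] using add_nonneg (hind (A \ K)) (hind (tsupport φ \ K))
  by_cases hxA : x ∈ A
  · rw [indicator_of_mem hxA, indicator_of_mem (show x ∈ A \ K from ⟨hxA, hxK⟩),
      Pi.one_apply, abs_of_nonneg (by linarith [h01.2])]
    linarith [h01.1, hind (tsupport φ \ K)]
  · rw [indicator_of_notMem hxA, indicator_of_notMem fun h => hxA h.1, zero_sub, abs_neg,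
      abs_of_nonneg h01.1, zero_add]
    by_cases hxφ : x ∈ tsupport φ
    · rw [indicator_of_mem (show x ∈ tsupport φ \ K from ⟨hxφ, hxK⟩)]
      exact h01.2
    · rw [image_eq_zero_of_notMem_tsupport hxφ]
      exact hind _

lemma exists_isOpen_pairwiseDisjoint_superset [T2Space X] {s : Finset ι} {K : ι → Set X}
    (hK : ∀ m, IsCompact (K m)) (hd : (s : Set ι).PairwiseDisjoint K) :
    ∃ W : ι → Set X, (∀ m, IsOpen (W m)) ∧ (∀ m, K m ⊆ W m) ∧ (s : Set ι).PairwiseDisjoint W := by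
  have hnhds : (s : Set ι).PairwiseDisjoint fun m => 𝓝ˢ (K m) := fun m hm l hl hml =>
    separatedNhds_iff_disjoint.1 (SeparatedNhds.of_isCompact_isCompact (hK m) (hK l) (hd hm hl hml))
  obtain ⟨N, hN, hNd⟩ := hnhds.exists_mem_filter s.finite_toSet
  exact ⟨fun m => interior (N m), fun m => isOpen_interior,
    fun m => subset_interior_iff_mem_nhdsSet.2 (hN m), hNd.mono fun m => interior_subset⟩

end Subpartition

section Approximation

variable {X E : Type*} [TopologicalSpace X] [MeasurableSpace X] [BorelSpace X]
  [NormedAddCommGroup E] [NormedSpace ℝ E]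

lemma Continuous.integrable_mul_apply {μ : Measure X} [IsFiniteMeasure μ] {φ : X → ℝ}
    (hφ : Continuous φ) (hφc : HasCompactSupport φ) {τ : X → E} (hτ : AEStronglyMeasurable τ μ)
    (hτ1 : ∀ᵐ x ∂μ, ‖τ x‖ ≤ 1) (f : StrongDual ℝ E) : Integrable (fun x => φ x * f (τ x)) μ :=
  (hφ.integrable_of_hasCompactSupport hφc).mul_bdd (f.continuous.comp_aestronglyMeasurable hτ)
    (hτ1.mono fun _ hx => f.le_opNorm_of_le hx)

lemma ofReal_sum_integral_le_lintegral {C : Set E} {g : E → ℝ≥0∞} {μ : Measure X}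
    [IsFiniteMeasure μ] {τ : X → E} (hτ : AEStronglyMeasurable τ μ)
    (hτC : ∀ᵐ x ∂μ, τ x ∈ C ∧ ‖τ x‖ ≤ 1) {ι : Type*} {Ω : Set X} {s : Finset ι}
    {φ : ι → X → ℝ} (hφ : IsSubpartitionOfUnity Ω s φ) {f : ι → StrongDual ℝ E}
    (hf : ∀ m ∈ s, f m ∈ linearMinorants C g) :
    ENNReal.ofReal (∑ m ∈ s, ∫ x, φ m x * f m (τ x) ∂μ) ≤ ∫⁻ x, g (τ x) ∂μ := by
  have hint : ∀ m ∈ s, Integrable (fun x => φ m x * f m (τ x)) μ := fun m hm =>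
    (hφ.continuous m hm).integrable_mul_apply (hφ.hasCompactSupport m hm) hτ
      (hτC.mono fun _ hx => hx.2) (f m)
  rw [← integral_finsetSum s hint]
  refine (ofReal_integral_le_lintegral_ofReal (integrable_finsetSum s hint)).trans
    (lintegral_mono_ae ?_)
  filter_upwards [hτC] with x hx
  exact ofReal_sum_mul_le (fun m hm => hφ.nonneg m hm x) (hφ.sum_le_one x)
    fun m hm => hf m hm _ hx.1

lemma tendsto_integral_mul_apply_of_tendsto_coord {d : ℕ} {μ : Measure X} [IsFiniteMeasure μ]
    {μk : ℕ → Measure X} [∀ k, IsFiniteMeasure (μk k)] {φ : X → ℝ} (hφ : Continuous φ)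
    (hφc : HasCompactSupport φ) {τ : X → Fin d → ℝ} (hτ : AEStronglyMeasurable τ μ)
    (hτ1 : ∀ᵐ x ∂μ, ‖τ x‖ ≤ 1) {τk : ℕ → X → Fin d → ℝ}
    (hτk : ∀ k, AEStronglyMeasurable (τk k) (μk k)) (hτk1 : ∀ k, ∀ᵐ x ∂(μk k), ‖τk k x‖ ≤ 1)
    (hlim : ∀ i, Tendsto (fun k => ∫ x, φ x * τk k x i ∂(μk k)) atTop
      (𝓝 (∫ x, φ x * τ x i ∂μ))) (f : StrongDual ℝ (Fin d → ℝ)) :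
    Tendsto (fun k => ∫ x, φ x * f (τk k x) ∂(μk k)) atTop (𝓝 (∫ x, φ x * f (τ x) ∂μ)) := by
  have hcoord : ∀ {μ' : Measure X} [IsFiniteMeasure μ'] {τ' : X → Fin d → ℝ},
      AEStronglyMeasurable τ' μ' → (∀ᵐ x ∂μ', ‖τ' x‖ ≤ 1) →
        ∀ i, Integrable (fun x => φ x * τ' x i) μ' :=
    fun hτ' hτ'1 i => hφ.integrable_mul_apply hφc hτ' hτ'1 (ContinuousLinearMap.proj i)
  have hk : ∀ k, ∫ x, φ x * f (τk k x) ∂(μk k) =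
      ∑ i, f (Pi.single i 1) * ∫ x, φ x * τk k x i ∂(μk k) :=
    fun k => integral_mul_apply_eq_sum (hcoord (hτk k) (hτk1 k)) f
  simp_rw [hk, integral_mul_apply_eq_sum (hcoord hτ hτ1) f]
  exact tendsto_finsetSum _ fun i _ => (hlim i).const_mul _

variable {ν : Measure X} [IsFiniteMeasure ν]

lemma setIntegral_le_integral_mul_add {h : X → ℝ} (hh : Integrable h ν)
    {c : ℝ} (hc : ∀ᵐ x ∂ν, |h x| ≤ c) {A K : Set X} (hA : MeasurableSet A) (hK : MeasurableSet K)
    (hKA : K ⊆ A) {φ : X → ℝ} (hφ : Continuous φ) (hφ01 : ∀ x, φ x ∈ Icc 0 1)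
    (hφK : EqOn φ 1 K) :
    ∫ x in A, h x ∂ν ≤ ∫ x, φ x * h x ∂ν + c * (ν.real (A \ K) + ν.real (tsupport φ \ K)) := by
  set D := A \ K
  set D' := tsupport φ \ K
  have hD : MeasurableSet D := hA.diff hK
  have hD' : MeasurableSet D' := (isClosed_tsupport φ).measurableSet.diff hK
  have hpt := abs_indicator_one_sub_le hKA hφ01 hφK
  have hint : Integrable (fun x => c * (D.indicator 1 x + D'.indicator 1 x)) ν :=
    ((integrable_const 1).indicator hD |>.add ((integrable_const 1).indicator hD')).const_mul c
  have hdiff : ∫ x in A, h x ∂ν - ∫ x, φ x * h x ∂ν = ∫ x, (A.indicator 1 x - φ x) * h x ∂ν := by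
    have hφh : Integrable (fun x => φ x * h x) ν :=
      hh.bdd_mul hφ.aestronglyMeasurable (c := 1) (ae_of_all _ fun x => by
        rw [Real.norm_eq_abs, abs_of_nonneg (hφ01 x).1]; exact (hφ01 x).2)
    rw [← integral_indicator hA, ← integral_sub (hh.indicator hA) hφh]
    refine integral_congr_ae (ae_of_all _ fun x => ?_)
    by_cases hx : x ∈ A <;> simp [hx, sub_mul]
  have hbound : ∫ x, (A.indicator 1 x - φ x) * h x ∂ν ≤ c * (ν.real D + ν.real D') := by
    refine (Real.le_norm_self _).trans ((norm_integral_le_of_norm_le hint ?_).trans_eq ?_)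
    · filter_upwards [hc] with x hx
      rw [norm_mul, Real.norm_eq_abs, Real.norm_eq_abs, mul_comm c]
      exact mul_le_mul (hpt x) hx (abs_nonneg _) ((abs_nonneg _).trans (hpt x))
    · rw [integral_const_mul, integral_add ((integrable_const 1).indicator hD)
        ((integrable_const 1).indicator hD'), integral_indicator_one hD, integral_indicator_one hD']
  linarith

variable [T2Space X] [ν.InnerRegularCompactLTTop]

lemma exists_isCompact_subset_inter_measureReal_sdiff_le {A Ω : Set X} (hA : MeasurableSet A)
    (hΩ : IsOpen Ω) (hνΩ : ν Ωᶜ = 0) {δ : ℝ} (hδ : 0 < δ) :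
    ∃ K ⊆ A ∩ Ω, IsCompact K ∧ ν.real (A \ K) ≤ δ := by
  obtain ⟨K, hKA, hK, hνK⟩ := (hA.inter hΩ.measurableSet).exists_isCompact_sdiff_lt
    (measure_ne_top ν _) (ofReal_pos.2 hδ).ne'
  refine ⟨K, hKA, hK, toReal_le_of_le_ofReal hδ.le ?_⟩
  calc ν (A \ K) ≤ ν ((A ∩ Ω) \ K ∪ Ωᶜ) := measure_mono fun x ⟨hxA, hxK⟩ => by
        by_cases hxΩ : x ∈ Ω
        exacts [Or.inl ⟨⟨hxA, hxΩ⟩, hxK⟩, Or.inr hxΩ]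
    _ ≤ ν ((A ∩ Ω) \ K) := (measure_union_le _ _).trans (by rw [hνΩ, add_zero])
    _ ≤ ENNReal.ofReal δ := hνK.le

variable [LocallyCompactSpace X]

lemma exists_cutoff_measureReal_tsupport_sdiff_le {K V : Set X} (hK : IsCompact K) (hV : IsOpen V)
    (hKV : K ⊆ V) {δ : ℝ} (hδ : 0 < δ) :
    ∃ φ : X → ℝ, Continuous φ ∧ HasCompactSupport φ ∧ tsupport φ ⊆ V ∧ EqOn φ 1 K ∧
      (∀ x, φ x ∈ Icc 0 1) ∧ ν.real (tsupport φ \ K) ≤ δ := by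
  obtain ⟨U, hKU, hU, hνU⟩ := hK.exists_isOpen_lt_add (μ := ν) (ofReal_pos.2 hδ).ne'
  obtain ⟨φ, hφK, hφc, hφUV, hφ01⟩ :=
    exists_continuousMap_one_of_isCompact_subset_isOpen hK (hU.inter hV) (subset_inter hKU hKV)
  refine ⟨φ, φ.continuous, hφc, hφUV.trans inter_subset_right, hφK, hφ01,
    toReal_le_of_le_ofReal hδ.le ?_⟩
  calc ν (tsupport φ \ K) ≤ ν (U \ K) :=
        measure_mono (sdiff_subset_sdiff_left (hφUV.trans inter_subset_left))
    _ ≤ ENNReal.ofReal δ :=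
        (measure_sdiff_lt_of_lt_add hK.measurableSet.nullMeasurableSet hKU
          (measure_ne_top ν _) hνU).le

lemma exists_subpartitionOfUnity_sum_setIntegral_le {Ω : Set X} (hΩ : IsOpen Ω) (hνΩ : ν Ωᶜ = 0)
    {ι : Type*} (s : Finset ι) {A : ι → Set X} (hA : ∀ m, MeasurableSet (A m))
    (hAd : (s : Set ι).PairwiseDisjoint A) {h : ι → X → ℝ} (hh : ∀ m, Integrable (h m) ν)
    {c : ι → ℝ} (hc : ∀ m, ∀ᵐ x ∂ν, |h m x| ≤ c m) {ε : ℝ} (hε : 0 < ε) :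
    ∃ φ : ι → X → ℝ, IsSubpartitionOfUnity Ω s φ ∧
      ∑ m ∈ s, ∫ x in A m, h m x ∂ν ≤ ∑ m ∈ s, ∫ x, φ m x * h m x ∂ν + ε := by
  set c' := ∑ m ∈ s, |c m|
  set δ := ε / (2 * c' + 1)
  have hc' : 0 ≤ c' := Finset.sum_nonneg fun m _ => abs_nonneg _
  have hδ : 0 < δ := by positivity
  have hδε : 2 * c' * δ ≤ ε := by
    have : δ * (2 * c' + 1) = ε := div_mul_cancel₀ _ (by positivity)
    nlinarith
  choose K hKA hK hνK using fun m =>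
    exists_isCompact_subset_inter_measureReal_sdiff_le (hA m) hΩ hνΩ hδ
  obtain ⟨W, hW, hKW, hWd⟩ := exists_isOpen_pairwiseDisjoint_superset hK
    (hAd.mono fun m => (hKA m).trans inter_subset_left)
  choose φ hφ hφc hφV hφK hφ01 hνφ using fun m =>
    exists_cutoff_measureReal_tsupport_sdiff_le (ν := ν) (hK m) ((hW m).inter hΩ)
      (subset_inter (hKW m) ((hKA m).trans inter_subset_right)) hδ
  refine ⟨φ, .of_pairwiseDisjoint (fun m _ => hφ m) (fun m _ => hφc m)
    (fun m _ => (hφV m).trans inter_subset_right) (fun m _ => hφ01 m)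
    (hWd.mono fun m => (subset_tsupport _).trans ((hφV m).trans inter_subset_left)), ?_⟩
  have hterm : ∀ m, ∫ x in A m, h m x ∂ν ≤ ∫ x, φ m x * h m x ∂ν + |c m| * (2 * δ) := by
    intro m
    refine (setIntegral_le_integral_mul_add (hh m) (hc m) (hA m) (hK m).measurableSet
      ((hKA m).trans inter_subset_left) (hφ m) (hφ01 m) (hφK m)).trans ?_
    have hν : ν.real (A m \ K m) + ν.real (tsupport (φ m) \ K m) ≤ 2 * δ := by
      linarith [hνK m, hνφ m]
    have h₁ := mul_le_mul_of_nonneg_left hν (abs_nonneg (c m))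
    have h₀ : 0 ≤ ν.real (A m \ K m) + ν.real (tsupport (φ m) \ K m) := by positivity
    have h₂ := mul_le_mul_of_nonneg_right (le_abs_self (c m)) h₀
    linarith
  calc ∑ m ∈ s, ∫ x in A m, h m x ∂ν ≤ ∑ m ∈ s, (∫ x, φ m x * h m x ∂ν + |c m| * (2 * δ)) :=
        Finset.sum_le_sum fun m _ => hterm m
    _ = ∑ m ∈ s, ∫ x, φ m x * h m x ∂ν + 2 * c' * δ := by
        rw [Finset.sum_add_distrib, ← Finset.sum_mul]; ring
    _ ≤ ∑ m ∈ s, ∫ x, φ m x * h m x ∂ν + ε := by linarith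

theorem lintegral_finsetSup_ofReal_le_of_subpartition {Ω : Set X} (hΩ : IsOpen Ω) (hνΩ : ν Ωᶜ = 0)
    {ι : Type*} [DecidableEq ι] (s : Finset ι) {u : ι → X → ℝ} (hu : ∀ m, Measurable (u m))
    {c : ι → ℝ} (hc : ∀ m, ∀ᵐ x ∂ν, |u m x| ≤ c m) {L : ℝ≥0∞}
    (hL : ∀ φ, IsSubpartitionOfUnity Ω s φ →
      ENNReal.ofReal (∑ m ∈ s, ∫ x, φ m x * u m x ∂ν) ≤ L) :
    ∫⁻ x, s.sup (fun m => ENNReal.ofReal (u m x)) ∂ν ≤ L := by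
  obtain ⟨A, hA, hAd, hAx⟩ := exists_measurableSet_sup_ofReal_eq_sum_indicator s hu
  have hui : ∀ m, Integrable (u m) ν := fun m =>
    .of_bound (hu m).aestronglyMeasurable (c m) ((hc m).mono fun x hx => by rwa [Real.norm_eq_abs])
  have hS : Integrable (fun x => ∑ m ∈ s, (A m).indicator (u m) x) ν :=
    integrable_finsetSum s fun m _ => (hui m).indicator (hA m)
  have hlin : ∫⁻ x, s.sup (fun m => ENNReal.ofReal (u m x)) ∂ν =
      ENNReal.ofReal (∑ m ∈ s, ∫ x in A m, u m x ∂ν) := by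
    simp_rw [← fun x => (hAx x).2]
    rw [← ofReal_integral_eq_lintegral_ofReal hS (ae_of_all _ fun x => (hAx x).1),
      integral_finsetSum s fun m _ => (hui m).indicator (hA m)]
    simp_rw [integral_indicator (hA _)]
  rw [hlin]
  refine ENNReal.le_of_forall_pos_le_add fun ε hε _ => ?_
  obtain ⟨φ, hφ, hφA⟩ :=
    exists_subpartitionOfUnity_sum_setIntegral_le hΩ hνΩ s hA hAd hui hc (NNReal.coe_pos.2 hε)
  calc ENNReal.ofReal (∑ m ∈ s, ∫ x in A m, u m x ∂ν)
      ≤ ENNReal.ofReal (∑ m ∈ s, ∫ x, φ m x * u m x ∂ν + ε) := ofReal_le_ofReal hφA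
    _ ≤ ENNReal.ofReal (∑ m ∈ s, ∫ x, φ m x * u m x ∂ν) + ENNReal.ofReal ε := ofReal_add_le
    _ ≤ L + ε := by rw [ofReal_coe_nnreal]; gcongr; exact hL φ hφ

theorem lintegral_iSup_ofReal_le_of_subpartition {Ω : Set X} (hΩ : IsOpen Ω) (hνΩ : ν Ωᶜ = 0)
    {u : ℕ → X → ℝ} (hu : ∀ m, Measurable (u m)) {c : ℕ → ℝ} (hc : ∀ m, ∀ᵐ x ∂ν, |u m x| ≤ c m)
    {L : ℝ≥0∞} (hL : ∀ s φ, IsSubpartitionOfUnity Ω s φ →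
      ENNReal.ofReal (∑ m ∈ s, ∫ x, φ m x * u m x ∂ν) ≤ L) :
    ∫⁻ x, ⨆ m, ENNReal.ofReal (u m x) ∂ν ≤ L := by
  have hmeas : ∀ M, Measurable fun x => partialSups (fun m => ENNReal.ofReal (u m x)) M := by
    intro M
    simp_rw [partialSups_eq_sup_range, ← Finset.sup'_eq_sup Finset.nonempty_range_add_one]
    exact Finset.measurable_range_sup'' fun m _ => (hu m).ennreal_ofReal
  rw [lintegral_congr fun x => (iSup_partialSups_eq fun m => ENNReal.ofReal (u m x)).symm,
    lintegral_iSup hmeas fun M N hMN x => (partialSups _).monotone hMN]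
  refine iSup_le fun M => ?_
  simp_rw [partialSups_eq_sup_range]
  exact lintegral_finsetSup_ofReal_le_of_subpartition hΩ hνΩ _ hu hc (hL _)

theorem lintegral_iSup_le_liminf_of_tendsto {C : Set E} {g : E → ℝ≥0∞}
    {νk : ℕ → Measure X} [∀ k, IsFiniteMeasure (νk k)] {Ω : Set X} (hΩ : IsOpen Ω)
    (hνΩ : ν Ωᶜ = 0) {σ : X → E} (hσ : AEStronglyMeasurable σ ν) (hσ1 : ∀ᵐ x ∂ν, ‖σ x‖ ≤ 1)
    {σk : ℕ → X → E} (hσk : ∀ k, AEStronglyMeasurable (σk k) (νk k))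
    (hσkC : ∀ k, ∀ᵐ x ∂(νk k), σk k x ∈ C ∧ ‖σk k x‖ ≤ 1)
    (hweak : ∀ φ : X → ℝ, Continuous φ → HasCompactSupport φ → tsupport φ ⊆ Ω →
      ∀ f : StrongDual ℝ E,
        Tendsto (fun k => ∫ x, φ x * f (σk k x) ∂(νk k)) atTop (𝓝 (∫ x, φ x * f (σ x) ∂ν)))
    {e : ℕ → StrongDual ℝ E} (he : ∀ m, e m ∈ linearMinorants C g) :
    ∫⁻ x, ⨆ m, ENNReal.ofReal (e m (σ x)) ∂ν ≤
      liminf (fun k => ∫⁻ x, g (σk k x) ∂(νk k)) atTop := by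
  obtain ⟨τ, hτ, hστ⟩ : ∃ τ, StronglyMeasurable τ ∧ σ =ᵐ[ν] τ :=
    ⟨hσ.mk σ, hσ.stronglyMeasurable_mk, hσ.ae_eq_mk⟩
  have hστ' : ∫⁻ x, ⨆ m, ENNReal.ofReal (e m (σ x)) ∂ν = ∫⁻ x, ⨆ m, ENNReal.ofReal (e m (τ x)) ∂ν :=
    lintegral_congr_ae (hστ.mono fun x hx => by simp only [hx])
  rw [hστ']
  refine lintegral_iSup_ofReal_le_of_subpartition hΩ hνΩ (c := fun m => ‖e m‖)
    (fun m => ((e m).continuous.comp_stronglyMeasurable hτ).measurable)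
    (fun m => ?_) fun s φ hφ => ?_
  · filter_upwards [hσ1, hστ] with x hx hxτ
    rw [← Real.norm_eq_abs, ← hxτ]
    simpa using (e m).le_opNorm_of_le hx
  · have hlim : Tendsto (fun k => ∑ m ∈ s, ∫ x, φ m x * e m (σk k x) ∂(νk k)) atTop
        (𝓝 (∑ m ∈ s, ∫ x, φ m x * e m (τ x) ∂ν)) := by
      refine tendsto_finsetSum s fun m hm => ?_
      have hστm : (fun x => φ m x * e m (σ x)) =ᵐ[ν] fun x => φ m x * e m (τ x) :=
        hστ.mono fun x hx => by simp only [hx]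
      rw [← integral_congr_ae hστm]
      exact hweak _ (hφ.continuous m hm) (hφ.hasCompactSupport m hm) (hφ.tsupport_subset m hm) _
    rw [← ((ENNReal.continuous_ofReal.tendsto _).comp hlim).liminf_eq]
    exact liminf_le_liminf (Eventually.of_forall fun k =>
      ofReal_sum_integral_le_lintegral (hσk k) (hσkC k) hφ fun m _ => he m)

end Approximation

lemma norm_le_one_of_sum_sq_eq_one {d : ℕ} {y : Fin d → ℝ} (hy : ∑ i, y i ^ 2 = 1) : ‖y‖ ≤ 1 := by
  refine (pi_norm_le_iff_of_nonneg zero_le_one).2 fun i => ?_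
  rw [Real.norm_eq_abs, ← sq_le_one_iff_abs_le_one, ← hy]
  exact Finset.single_le_sum (fun j _ => sq_nonneg (y j)) (Finset.mem_univ i)

/-- Measures are encoded by their polar decompositions `μ_k = σ_k ν_k` with `ν_k = |μ_k|`, and
weak-* convergence is tested against `C_c(Ω)`. -/
theorem reshetnyak_lsc_general {n d : ℕ} (Ω : Set (EuclideanSpace ℝ (Fin n))) (hΩ : IsOpen Ω)
    (C : Set (Fin d → ℝ)) (hCclosed : IsClosed C) (hCconv : Convex ℝ C)
    (hCcone : ∀ r : ℝ, 0 ≤ r → ∀ x ∈ C, r • x ∈ C)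
    (g : (Fin d → ℝ) → ℝ≥0∞) (hglsc : LowerSemicontinuous g)
    (hgconv : ∀ x ∈ C, ∀ y ∈ C, ∀ a b : ℝ, 0 ≤ a → 0 ≤ b → a + b = 1 →
      g (a • x + b • y) ≤ ENNReal.ofReal a * g x + ENNReal.ofReal b * g y)
    (hghom : ∀ r : ℝ, 0 < r → ∀ x ∈ C, g (r • x) = ENNReal.ofReal r * g x)
    (ν : Measure (EuclideanSpace ℝ (Fin n))) (νk : ℕ → Measure (EuclideanSpace ℝ (Fin n)))
    [IsFiniteMeasure ν] (hνk : ∀ k, IsFiniteMeasure (νk k))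
    (hνΩ : ν Ωᶜ = 0)
    (σ : EuclideanSpace ℝ (Fin n) → Fin d → ℝ)
    (σk : ℕ → EuclideanSpace ℝ (Fin n) → Fin d → ℝ)
    (hσm : AEMeasurable σ ν) (hσkm : ∀ k, AEMeasurable (σk k) (νk k))
    (hσ : ∀ᵐ x ∂ν, σ x ∈ C ∧ ∑ i, σ x i ^ 2 = 1)
    (hσk : ∀ k, ∀ᵐ x ∂(νk k), σk k x ∈ C ∧ ∑ i, σk k x i ^ 2 = 1)
    (hweak : ∀ φ : EuclideanSpace ℝ (Fin n) → ℝ, Continuous φ → HasCompactSupport φ →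
      tsupport φ ⊆ Ω → ∀ i : Fin d,
      Tendsto (fun k => ∫ x, φ x * σk k x i ∂(νk k)) atTop (nhds (∫ x, φ x * σ x i ∂ν))) :
    ∫⁻ x, g (σ x) ∂ν ≤ liminf (fun k => ∫⁻ x, g (σk k x) ∂(νk k)) atTop := by
  have hσ1 : ∀ᵐ x ∂ν, ‖σ x‖ ≤ 1 := hσ.mono fun x hx => norm_le_one_of_sum_sq_eq_one hx.2
  have hσk1 : ∀ k, ∀ᵐ x ∂(νk k), σk k x ∈ C ∧ ‖σk k x‖ ≤ 1 :=
    fun k => (hσk k).mono fun x hx => ⟨hx.1, norm_le_one_of_sum_sq_eq_one hx.2⟩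
  obtain ⟨e, he, hsup⟩ := exists_seq_iSup_eq_biSup
    (fun f : StrongDual ℝ (Fin d → ℝ) =>
      (ENNReal.continuous_ofReal.comp f.continuous).lowerSemicontinuous)
    ⟨0, zero_mem_linearMinorants (C := C) (g := g)⟩
  have hrepr : ∀ᵐ x ∂ν, g (σ x) = ⨆ m, ENNReal.ofReal (e m (σ x)) := hσ.mono fun x hx =>
    ((hsup (σ x)).trans (iSup_linearMinorants_eq hCclosed hCconv hCcone hglsc hgconv hghom hx.1
      fun h => by simp [h] at hx)).symm
  rw [lintegral_congr_ae hrepr]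
  exact lintegral_iSup_le_liminf_of_tendsto hΩ hνΩ hσm.aestronglyMeasurable hσ1
    (fun k => (hσkm k).aestronglyMeasurable) hσk1
    (fun φ hφ hφc hφΩ => tendsto_integral_mul_apply_of_tendsto_coord hφ hφc
      hσm.aestronglyMeasurable hσ1 (fun k => (hσkm k).aestronglyMeasurable)
      (fun k => (hσk1 k).mono fun _ hx => hx.2) (hweak φ hφ hφc hφΩ)) he

/-- Reshetnyak lower semicontinuity (Theorem 3.1(1)). Measures are encoded by their polar
decompositions `μ_k = σ_k ν_k` with `ν_k = |μ_k|` finite, `σ_k` unit-length with values in a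
closed convex cone `C`, and weak-* convergence is tested against `C_c(Ω)` functions. For
`g : C → [0,∞]` lower semicontinuous, convex and positively `1`-homogeneous,
`∫ g(dμ/d|μ|) d|μ| ≤ liminf_k ∫ g(dμ_k/d|μ_k|) d|μ_k|`. -/
theorem reshetnyak_lsc {n d : ℕ} (Ω : Set (EuclideanSpace ℝ (Fin n))) (hΩ : IsOpen Ω)
    (C : Set (Fin d → ℝ)) (hCclosed : IsClosed C) (hCconv : Convex ℝ C)
    (hCcone : ∀ r : ℝ, 0 ≤ r → ∀ x ∈ C, r • x ∈ C)
    (g : (Fin d → ℝ) → ℝ≥0∞) (hglsc : LowerSemicontinuous g)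
    (hgconv : ∀ x ∈ C, ∀ y ∈ C, ∀ a b : ℝ, 0 ≤ a → 0 ≤ b → a + b = 1 →
      g (a • x + b • y) ≤ ENNReal.ofReal a * g x + ENNReal.ofReal b * g y)
    (hghom : ∀ r : ℝ, 0 < r → ∀ x ∈ C, g (r • x) = ENNReal.ofReal r * g x)
    (ν : Measure (EuclideanSpace ℝ (Fin n))) (νk : ℕ → Measure (EuclideanSpace ℝ (Fin n)))
    [IsFiniteMeasure ν] (hνk : ∀ k, IsFiniteMeasure (νk k))
    (hνΩ : ν Ωᶜ = 0) (hνkΩ : ∀ k, νk k Ωᶜ = 0)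
    (σ : EuclideanSpace ℝ (Fin n) → Fin d → ℝ)
    (σk : ℕ → EuclideanSpace ℝ (Fin n) → Fin d → ℝ)
    (hσm : AEMeasurable σ ν) (hσkm : ∀ k, AEMeasurable (σk k) (νk k))
    (hσ : ∀ᵐ x ∂ν, σ x ∈ C ∧ ∑ i, σ x i ^ 2 = 1)
    (hσk : ∀ k, ∀ᵐ x ∂(νk k), σk k x ∈ C ∧ ∑ i, σk k x i ^ 2 = 1)
    (hweak : ∀ φ : EuclideanSpace ℝ (Fin n) → ℝ, Continuous φ → HasCompactSupport φ →
      tsupport φ ⊆ Ω → ∀ i : Fin d,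
      Tendsto (fun k => ∫ x, φ x * σk k x i ∂(νk k)) atTop (nhds (∫ x, φ x * σ x i ∂ν))) :
    ∫⁻ x, g (σ x) ∂ν ≤ liminf (fun k => ∫⁻ x, g (σk k x) ∂(νk k)) atTop :=
  reshetnyak_lsc_general Ω hΩ C hCclosed hCconv hCcone g hglsc hgconv hghom ν νk hνk hνΩ σ σk hσm
    hσkm hσ hσk hweak
end

section
/- With Ω, C, and measures as above, if g : C → [0, ∞) is continuous and positively 1-homogeneous and μ_k → μ strictly (i.e., μ_k converges weakly-* to μ and |μ_k|(Ω) → |μ|(Ω)), then ∫_Ω g(dμ_k/d|μ_k|) d|μ_k| → ∫_Ω g(dμ/d|μ|) d|μ|. -/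
/-!
Approximate the polar `σ` in `L¹(ν)` by a continuous field `τ` with compact support in `Ω` and
`|τ| ≤ 1`. For a unit vector `a` and `|b| ≤ 1` we have `|a - b|² ≤ 2 (1 - ⟪b, a⟫)`, so the defect
`|ν_k| - ∫ ⟪τ, σ_k⟫ dν_k = ∫ (1 - ⟪τ, σ_k⟫) dν_k` (with `|ν_k|` the total mass) measures how
far `σ_k` is from `τ`; by strict convergence it tends to `∫ (1 - ⟪τ, σ⟫) dν ≤ ∫ |σ - τ| dν`,
which is small. Uniform continuity of (a continuous extension of) `g` on the unit ball gives
`|g a - g b ⟪b, a⟫| ≤ ε + c (1 - ⟪b, a⟫)`, so `∫ g(σ_k) dν_k` lies within `ε |ν_k| + c · defect`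
of `∫ ⟪g(τ) τ, σ_k⟫ dν_k`, which converges by weak-* convergence; the same holds in the limit.
-/

open MeasureTheory Filter Metric Set Topology
open scoped RealInnerProductSpace

section Retraction

variable {E : Type*} [NormedAddCommGroup E] [InnerProductSpace ℝ E]

noncomputable def ballRetraction (y : E) : E := (max 1 ‖y‖)⁻¹ • y

theorem norm_ballRetraction_le (y : E) : ‖ballRetraction y‖ ≤ 1 := by
  rw [ballRetraction, norm_smul, norm_inv, Real.norm_of_nonneg (by positivity),
    inv_mul_le_one₀ (by positivity)]
  exact le_max_right _ _

theorem continuous_ballRetraction : Continuous (ballRetraction : E → E) :=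
  ((continuous_const.max continuous_norm).inv₀ fun _ => by positivity).smul continuous_id

theorem ballRetraction_of_norm_le {y : E} (hy : ‖y‖ ≤ 1) : ballRetraction y = y := by
  rw [ballRetraction, max_eq_left hy, inv_one, one_smul]

theorem norm_ballRetraction_sub_le (a : E) {b : E} (hb : ‖b‖ ≤ 1) :
    ‖ballRetraction a - b‖ ≤ ‖a - b‖ := by
  rcases le_or_gt ‖a‖ 1 with ha | ha
  · rw [ballRetraction_of_norm_le ha]
  set t := ‖a‖⁻¹
  have ht0 : 0 ≤ t := by positivity
  have ht1 : t ≤ 1 := inv_le_one_of_one_le₀ ha.le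
  have hta : t * ‖a‖ = 1 := inv_mul_cancel₀ (by positivity)
  have hab : ⟪a, b⟫ ≤ ‖a‖ :=
    (real_inner_le_norm a b).trans (mul_le_of_le_one_right (norm_nonneg a) hb)
  rw [ballRetraction, max_eq_right ha.le]
  refine (pow_le_pow_iff_left₀ (norm_nonneg _) (norm_nonneg _) two_ne_zero).mp ?_
  rw [norm_sub_sq_real, norm_sub_sq_real, norm_smul, real_inner_smul_left,
    Real.norm_of_nonneg ht0]
  nlinarith [mul_le_mul_of_nonneg_left hab (sub_nonneg.2 ht1), sq_nonneg (‖a‖ - 1)]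

end Retraction

section Approximation

variable {X : Type*} [TopologicalSpace X] [MeasurableSpace X] [BorelSpace X]
  [R1Space X] [LocallyCompactSpace X] {μ : Measure X} [IsFiniteMeasure μ] {Ω : Set X}

theorem exists_continuousMap_tsupport_subset_integral_one_sub_le [μ.InnerRegularCompactLTTop]
    (hΩ : IsOpen Ω) (hμΩ : μ Ωᶜ = 0) {η : ℝ} (hη : 0 < η) :
    ∃ χ : C(X, ℝ), HasCompactSupport χ ∧ tsupport χ ⊆ Ω ∧ (∀ x, χ x ∈ Icc 0 1) ∧
      ∫ x, (1 - χ x) ∂μ ≤ η := by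
  obtain ⟨K, hKΩ, hK, hKclosed, hμK⟩ := hΩ.measurableSet.exists_isCompact_isClosed_sdiff_lt
    (measure_ne_top μ Ω) (ENNReal.ofReal_pos.2 hη).ne'
  obtain ⟨χ, hχK, hχc, hχΩ, hχ01⟩ := exists_continuousMap_one_of_isCompact_subset_isOpen hK hΩ hKΩ
  refine ⟨χ, hχc, hχΩ, hχ01, ?_⟩
  have hμKc : μ Kᶜ ≤ ENNReal.ofReal η :=
    calc μ Kᶜ ≤ μ ((Ω \ K) ∪ Ωᶜ) := measure_mono fun x hx => by by_cases x ∈ Ω <;> simp_all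
      _ ≤ μ (Ω \ K) + μ Ωᶜ := measure_union_le _ _
      _ ≤ ENNReal.ofReal η := by rw [hμΩ, add_zero]; exact hμK.le
  calc ∫ x, (1 - χ x) ∂μ ≤ ∫ x, Kᶜ.indicator 1 x ∂μ := by
        refine integral_mono
          ((integrable_const 1).sub (χ.continuous.integrable_of_hasCompactSupport hχc))
          ((integrable_const 1).indicator hKclosed.measurableSet.compl) fun x => ?_
        by_cases hx : x ∈ K
        · simp [hχK hx, hx]
        · simp [hx, (hχ01 x).1]
    _ = μ.real Kᶜ := integral_indicator_one hKclosed.measurableSet.compl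
    _ ≤ η := ENNReal.toReal_le_of_le_ofReal hη.le hμKc

variable {E : Type*} [NormedAddCommGroup E] [InnerProductSpace ℝ E]

theorem exists_continuous_norm_le_one_integral_norm_sub_le [NormalSpace X] [μ.Regular]
    (hΩ : IsOpen Ω) (hμΩ : μ Ωᶜ = 0) {f : X → E} (hf : AEStronglyMeasurable f μ)
    (hf1 : ∀ᵐ x ∂μ, ‖f x‖ ≤ 1) {η : ℝ} (hη : 0 < η) :
    ∃ τ : X → E, Continuous τ ∧ HasCompactSupport τ ∧ tsupport τ ⊆ Ω ∧ (∀ x, ‖τ x‖ ≤ 1) ∧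
      ∫ x, ‖f x - τ x‖ ∂μ ≤ η := by
  have hfi : Integrable f μ := .of_bound hf 1 hf1
  obtain ⟨f₀, -, hf₀, hf₀c, hf₀i⟩ := hfi.exists_hasCompactSupport_integral_sub_le (half_pos hη)
  obtain ⟨χ, hχc, hχΩ, hχ01, hχ⟩ :=
    exists_continuousMap_tsupport_subset_integral_one_sub_le hΩ hμΩ (half_pos hη)
  set τ := fun x => χ x • ballRetraction (f₀ x)
  have hτ1 : ∀ x, ‖τ x‖ ≤ 1 := fun x => by
    rw [norm_smul, Real.norm_of_nonneg (hχ01 x).1]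
    exact mul_le_one₀ (hχ01 x).2 (norm_nonneg _) (norm_ballRetraction_le _)
  have hτc : Continuous τ := χ.continuous.smul (continuous_ballRetraction.comp hf₀c)
  have hpt : ∀ᵐ x ∂μ, ‖f x - τ x‖ ≤ ‖f x - f₀ x‖ + (1 - χ x) := by
    filter_upwards [hf1] with x hx
    have hdecomp : f x - τ x =
        (f x - ballRetraction (f₀ x)) + (1 - χ x) • ballRetraction (f₀ x) := by
      simp only [τ]; module
    rw [hdecomp]
    refine (norm_add_le _ _).trans (add_le_add ?_ ?_)
    · rw [norm_sub_rev, norm_sub_rev (f x)]; exact norm_ballRetraction_sub_le _ hx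
    · rw [norm_smul, Real.norm_of_nonneg (sub_nonneg.2 (hχ01 x).2)]
      exact mul_le_of_le_one_right (sub_nonneg.2 (hχ01 x).2) (norm_ballRetraction_le _)
  have hτs : HasCompactSupport τ := hχc.smul_right
  refine ⟨τ, hτc, hτs, (tsupport_smul_subset_left _ _).trans hχΩ, hτ1, ?_⟩
  have hi : Integrable (fun x => 1 - χ x) μ :=
    (integrable_const 1).sub (χ.continuous.integrable_of_hasCompactSupport hχc)
  calc ∫ x, ‖f x - τ x‖ ∂μ ≤ ∫ x, (‖f x - f₀ x‖ + (1 - χ x)) ∂μ :=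
        integral_mono_ae (hfi.sub (hτc.integrable_of_hasCompactSupport hτs)).norm
          ((hfi.sub hf₀i).norm.add hi) hpt
    _ = ∫ x, ‖f x - f₀ x‖ ∂μ + ∫ x, (1 - χ x) ∂μ := integral_add (hfi.sub hf₀i).norm hi
    _ ≤ η := by linarith

end Approximation

section Modulus

theorem IsCompact.exists_forall_abs_le_add_mul_dist_sq {α : Type*} [PseudoMetricSpace α]
    {K A : Set α} (hK : IsCompact K) (hAK : A ⊆ K) {f : α → α → ℝ}
    (hf : ContinuousOn (Function.uncurry f) (K ×ˢ K)) (hdiag : ∀ a ∈ A, f a a = 0)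
    {ε : ℝ} (hε : 0 < ε) :
    ∃ c, 0 ≤ c ∧ ∀ a ∈ A, ∀ b ∈ K, |f a b| ≤ ε + c * dist a b ^ 2 := by
  obtain ⟨M, hM⟩ := (hK.prod hK).exists_bound_of_continuousOn hf
  obtain ⟨δ, hδ, hδf⟩ := Metric.uniformContinuousOn_iff.mp
    ((hK.prod hK).uniformContinuousOn_of_continuous hf) ε hε
  refine ⟨max M 0 / δ ^ 2, by positivity, fun a ha b hb => ?_⟩
  rcases lt_or_ge (dist a b) δ with hab | hab
  · have hclose := hδf (a, b) ⟨hAK ha, hb⟩ (a, a) ⟨hAK ha, hAK ha⟩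
      (by simpa [Prod.dist_eq, dist_comm] using hab)
    rw [Real.dist_eq, Function.uncurry_apply_pair, Function.uncurry_apply_pair, hdiag a ha,
      sub_zero] at hclose
    have : 0 ≤ max M 0 / δ ^ 2 * dist a b ^ 2 := by positivity
    linarith
  · have hδab : 1 ≤ dist a b ^ 2 / δ ^ 2 :=
      (one_le_div (by positivity)).2 (pow_le_pow_left₀ hδ.le hab 2)
    calc |f a b| ≤ max M 0 := (hM (a, b) ⟨hAK ha, hb⟩).trans (le_max_left _ _)
      _ ≤ max M 0 * (dist a b ^ 2 / δ ^ 2) := le_mul_of_one_le_right (le_max_right _ _) hδab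
      _ ≤ ε + max M 0 / δ ^ 2 * dist a b ^ 2 := by rw [mul_div, div_mul_eq_mul_div]; linarith

variable {E : Type*} [NormedAddCommGroup E] [InnerProductSpace ℝ E] [FiniteDimensional ℝ E]

theorem exists_forall_abs_sub_mul_inner_le {G : E → ℝ}
    (hG : ContinuousOn G (closedBall 0 1)) {ε : ℝ} (hε : 0 < ε) :
    ∃ c, 0 ≤ c ∧ ∀ a ∈ sphere (0 : E) 1, ∀ b ∈ closedBall (0 : E) 1,
      |G a - G b * ⟪b, a⟫| ≤ ε + c * (1 - ⟪b, a⟫) := by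
  have hcont : ContinuousOn (Function.uncurry fun a b : E => G a - G b * ⟪b, a⟫)
      (closedBall 0 1 ×ˢ closedBall 0 1) :=
    (hG.comp continuousOn_fst fun _ h => h.1).sub
      ((hG.comp continuousOn_snd fun _ h => h.2).mul
        (continuous_snd.inner continuous_fst).continuousOn)
  obtain ⟨c, hc, hbound⟩ := (isCompact_closedBall (0 : E) 1).exists_forall_abs_le_add_mul_dist_sq
    sphere_subset_closedBall hcont (fun a ha => by
      rw [real_inner_self_eq_norm_sq, mem_sphere_zero_iff_norm.mp ha]; ring) hε
  refine ⟨2 * c, by positivity, fun a ha b hb => (hbound a ha b hb).trans ?_⟩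
  have hdist : dist a b ^ 2 ≤ 2 * (1 - ⟪b, a⟫) := by
    rw [dist_eq_norm, norm_sub_sq_real, mem_sphere_zero_iff_norm.mp ha, real_inner_comm]
    nlinarith [mem_closedBall_zero_iff.mp hb, norm_nonneg b]
  nlinarith

theorem abs_integral_comp_sub_integral_inner_le {X : Type*}
    [MeasurableSpace X] {μ : Measure X} [IsFiniteMeasure μ] {G : E → ℝ} (hG : Continuous G)
    {ε c : ℝ} (hGc : ∀ a ∈ sphere (0 : E) 1, ∀ b ∈ closedBall (0 : E) 1,
      |G a - G b * ⟪b, a⟫| ≤ ε + c * (1 - ⟪b, a⟫))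
    {s τ : X → E} (hs : AEStronglyMeasurable s μ) (hs1 : ∀ᵐ x ∂μ, ‖s x‖ = 1)
    (hτ : AEStronglyMeasurable τ μ) (hτ1 : ∀ x, ‖τ x‖ ≤ 1) :
    |∫ x, G (s x) ∂μ - ∫ x, ⟪G (τ x) • τ x, s x⟫ ∂μ| ≤
      ε * μ.real univ + c * (μ.real univ - ∫ x, ⟪τ x, s x⟫ ∂μ) := by
  obtain ⟨M, hM⟩ := (isCompact_closedBall (0 : E) 1).exists_bound_of_continuousOn hG.continuousOn
  have hinner : ∀ᵐ x ∂μ, ‖⟪τ x, s x⟫‖ ≤ 1 := by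
    filter_upwards [hs1] with x hx
    exact (norm_inner_le_norm _ _).trans (by rw [hx, mul_one]; exact hτ1 x)
  have hGs : Integrable (fun x => G (s x)) μ := .of_bound (hG.comp_aestronglyMeasurable hs) M <| by
    filter_upwards [hs1] with x hx
    exact hM _ (mem_closedBall_zero_iff.2 hx.le)
  have hinner_int : Integrable (fun x => ⟪τ x, s x⟫) μ := .of_bound (hτ.inner hs) 1 hinner
  have hψ : Integrable (fun x => ⟪G (τ x) • τ x, s x⟫) μ := by
    simp_rw [real_inner_smul_left]
    refine .of_bound ((hG.comp_aestronglyMeasurable hτ).mul (hτ.inner hs)) (M * 1) ?_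
    filter_upwards [hinner] with x hx
    rw [norm_mul]
    exact mul_le_mul (hM _ (mem_closedBall_zero_iff.2 (hτ1 x))) hx (norm_nonneg _)
      ((norm_nonneg _).trans (hM _ (mem_closedBall_zero_iff.2 (hτ1 x))))
  have hdefect : Integrable (fun x => 1 - ⟪τ x, s x⟫) μ := (integrable_const 1).sub hinner_int
  rw [← integral_sub hGs hψ]
  calc |∫ x, (G (s x) - ⟪G (τ x) • τ x, s x⟫) ∂μ| ≤ ∫ x, (ε + c * (1 - ⟪τ x, s x⟫)) ∂μ := by
        refine norm_integral_le_of_norm_le (f := fun x => G (s x) - ⟪G (τ x) • τ x, s x⟫)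
          ((integrable_const ε).add (hdefect.const_mul c)) ?_
        filter_upwards [hs1] with x hx
        rw [real_inner_smul_left, Real.norm_eq_abs]
        exact hGc _ (mem_sphere_zero_iff_norm.2 hx) _ (mem_closedBall_zero_iff.2 (hτ1 x))
    _ = ε * μ.real univ + c * (μ.real univ - ∫ x, ⟪τ x, s x⟫ ∂μ) := by
        rw [integral_add (integrable_const ε) (hdefect.const_mul c),
          integral_const_mul, integral_sub (integrable_const 1) hinner_int, integral_const,
          integral_const, smul_eq_mul, smul_eq_mul, mul_one, mul_comm]

end Modulus

theorem eventually_abs_sub_lt_of_abs_sub_le {ι : Type*} {l : Filter ι} {A B D : ι → ℝ}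
    {a b d r : ℝ} (hB : Tendsto B l (𝓝 b)) (hD : Tendsto D l (𝓝 d))
    (hAB : ∀ k, |A k - B k| ≤ D k) (hr : |a - b| + d < r) : ∀ᶠ k in l, |A k - a| < r := by
  have h : Tendsto (fun k => |B k - b| + D k) l (𝓝 (|b - b| + d)) := (hB.sub_const b).abs.add hD
  rw [sub_self, abs_zero, zero_add] at h
  filter_upwards [h.eventually (gt_mem_nhds (show d < r - |a - b| by linarith))] with k hk
  linarith [abs_sub_le (A k) (B k) a, abs_sub_le (B k) b a, abs_sub_comm a b, hAB k]

section Reshetnyak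

variable {E : Type*} [NormedAddCommGroup E] [InnerProductSpace ℝ E]
variable {X : Type*} [MeasurableSpace X]

theorem measureReal_univ_sub_integral_inner_le {μ : Measure X} [IsFiniteMeasure μ] {s τ : X → E}
    (hs : AEStronglyMeasurable s μ) (hs1 : ∀ᵐ x ∂μ, ‖s x‖ = 1) (hτ : AEStronglyMeasurable τ μ)
    (hτ1 : ∀ x, ‖τ x‖ ≤ 1) : μ.real univ - ∫ x, ⟪τ x, s x⟫ ∂μ ≤ ∫ x, ‖s x - τ x‖ ∂μ := by
  have hinner : Integrable (fun x => ⟪τ x, s x⟫) μ := .of_bound (hτ.inner hs) 1 <| by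
    filter_upwards [hs1] with x hx
    exact (norm_inner_le_norm _ _).trans (by rw [hx, mul_one]; exact hτ1 x)
  have hdiff : Integrable (fun x => ‖s x - τ x‖) μ := .of_bound (hs.sub hτ).norm 2 <| by
    filter_upwards [hs1] with x hx
    rw [norm_norm]
    exact (norm_sub_le _ _).trans (by linarith [hτ1 x])
  have hreal : μ.real univ = ∫ _, (1 : ℝ) ∂μ := by simp
  rw [hreal, ← integral_sub (integrable_const _) hinner]
  refine integral_mono_ae ((integrable_const _).sub hinner) hdiff ?_
  filter_upwards [hs1] with x hx
  calc 1 - ⟪τ x, s x⟫ = ⟪s x - τ x, s x⟫ := by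
        rw [inner_sub_left, real_inner_self_eq_norm_sq, hx]; ring
    _ ≤ ‖s x - τ x‖ := (real_inner_le_norm _ _).trans (by rw [hx, mul_one])

variable [TopologicalSpace X] [BorelSpace X] [NormalSpace X] [R1Space X] [LocallyCompactSpace X]
  [FiniteDimensional ℝ E]

theorem tendsto_integral_comp_of_tendsto_integral_inner {ι : Type*} {l : Filter ι}
    {Ω : Set X} (hΩ : IsOpen Ω) {ν : Measure X} [IsFiniteMeasure ν] [ν.Regular] (hνΩ : ν Ωᶜ = 0)
    {νk : ι → Measure X} [∀ k, IsFiniteMeasure (νk k)] {σ : X → E} {σk : ι → X → E}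
    (hσ : AEStronglyMeasurable σ ν) (hσk : ∀ k, AEStronglyMeasurable (σk k) (νk k))
    (hσ1 : ∀ᵐ x ∂ν, ‖σ x‖ = 1) (hσk1 : ∀ k, ∀ᵐ x ∂(νk k), ‖σk k x‖ = 1)
    (hweak : ∀ φ : X → E, Continuous φ → HasCompactSupport φ → tsupport φ ⊆ Ω →
      Tendsto (fun k => ∫ x, ⟪φ x, σk k x⟫ ∂(νk k)) l (𝓝 (∫ x, ⟪φ x, σ x⟫ ∂ν)))
    (hmass : Tendsto (fun k => νk k univ) l (𝓝 (ν univ))) {G : E → ℝ} (hG : Continuous G) :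
    Tendsto (fun k => ∫ x, G (σk k x) ∂(νk k)) l (𝓝 (∫ x, G (σ x) ∂ν)) := by
  have hm : Tendsto (fun k => (νk k).real univ) l (𝓝 (ν.real univ)) :=
    (ENNReal.tendsto_toReal (measure_ne_top ν univ)).comp hmass
  rw [Metric.tendsto_nhds]
  intro r hr
  set m := ν.real univ
  -- chosen so that twice the error bound `ε m + c η` at the limit is below `r`
  set ε := r / (4 * (m + 1))
  obtain ⟨c, hc, hGc⟩ := exists_forall_abs_sub_mul_inner_le hG.continuousOn (ε := ε) (by positivity)
  set η := r / (4 * (c + 1))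
  obtain ⟨τ, hτc, hτs, hτΩ, hτ1, hστ⟩ := exists_continuous_norm_le_one_integral_norm_sub_le hΩ hνΩ
    hσ (hσ1.mono fun _ hx => hx.le) (η := η) (by positivity)
  have hψ := hweak (fun x => G (τ x) • τ x) ((hG.comp hτc).smul hτc) hτs.smul_left
    ((tsupport_smul_subset_right _ _).trans hτΩ)
  have hdefect : Tendsto (fun k => ε * (νk k).real univ + c * ((νk k).real univ -
      ∫ x, ⟪τ x, σk k x⟫ ∂(νk k))) l (𝓝 (ε * m + c * (m - ∫ x, ⟪τ x, σ x⟫ ∂ν))) :=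
    (hm.const_mul ε).add ((hm.sub (hweak τ hτc hτs hτΩ)).const_mul c)
  have hlim := abs_integral_comp_sub_integral_inner_le hG hGc hσ hσ1 hτc.aestronglyMeasurable hτ1
  have hdefect_le : m - ∫ x, ⟪τ x, σ x⟫ ∂ν ≤ η :=
    (measureReal_univ_sub_integral_inner_le hσ hσ1 hτc.aestronglyMeasurable hτ1).trans hστ
  have hεm : ε * m < r / 4 := by
    rw [div_mul_eq_mul_div, div_lt_div_iff₀ (by positivity) (by positivity)]; nlinarith
  have hcη : c * η < r / 4 := by
    rw [mul_div_assoc', div_lt_div_iff₀ (by positivity) (by positivity)]; nlinarith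
  have hcd := mul_le_mul_of_nonneg_left hdefect_le hc
  filter_upwards [eventually_abs_sub_lt_of_abs_sub_le (A := fun k => ∫ x, G (σk k x) ∂(νk k))
    (a := ∫ x, G (σ x) ∂ν) (r := r) hψ hdefect
    (fun k => abs_integral_comp_sub_integral_inner_le hG hGc (hσk k) (hσk1 k)
      hτc.aestronglyMeasurable hτ1) (by linarith)] with k hk
  rwa [Real.dist_eq]

end Reshetnyak

theorem ContinuousOn.exists_continuous_eqOn {Y : Type*} [TopologicalSpace Y] [NormalSpace Y]
    {s : Set Y} (hs : IsClosed s) {g : Y → ℝ} (hg : ContinuousOn g s) :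
    ∃ G : Y → ℝ, Continuous G ∧ EqOn G g s := by
  obtain ⟨G, hG⟩ := ContinuousMap.exists_restrict_eq hs ⟨s.domRestrict g, hg.domRestrict⟩
  exact ⟨G, G.continuous, fun x hx => congr($hG ⟨x, hx⟩)⟩

theorem EuclideanSpace.norm_toLp_eq_one_iff {ι : Type*} [Fintype ι] (v : ι → ℝ) :
    ‖WithLp.toLp 2 v‖ = 1 ↔ ∑ i, v i ^ 2 = 1 := by
  rw [← pow_eq_one_iff_of_nonneg (norm_nonneg _) two_ne_zero, EuclideanSpace.real_norm_sq_eq]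

theorem integral_inner_eq_sum_integral_mul {X : Type*} [MeasurableSpace X] {μ : Measure X}
    [IsFiniteMeasure μ] {d : ℕ} {φ s : X → EuclideanSpace ℝ (Fin d)}
    (hφ : AEStronglyMeasurable φ μ) {B : ℝ} (hφB : ∀ x, ‖φ x‖ ≤ B)
    (hs : AEStronglyMeasurable s μ) (hs1 : ∀ᵐ x ∂μ, ‖s x‖ ≤ 1) :
    ∫ x, ⟪φ x, s x⟫ ∂μ = ∑ i, ∫ x, φ x i * s x i ∂μ := by
  have hcoord : ∀ i, Continuous fun y : EuclideanSpace ℝ (Fin d) => y i :=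
    fun i => (EuclideanSpace.proj i).continuous
  simp_rw [PiLp.inner_apply, Real.inner_apply]
  refine integral_finsetSum _ fun i _ => ?_
  refine Integrable.bdd_mul (c := B) (.of_bound ((hcoord i).comp_aestronglyMeasurable hs) 1 ?_)
    ((hcoord i).comp_aestronglyMeasurable hφ)
    (.of_forall fun x => (PiLp.norm_apply_le _ i).trans (hφB x))
  filter_upwards [hs1] with x hx
  exact (PiLp.norm_apply_le _ i).trans hx

theorem tendsto_integral_inner_of_forall_apply {X : Type*} [MeasurableSpace X]
    [TopologicalSpace X] [OpensMeasurableSpace X] {ι : Type*} {l : Filter ι} {d : ℕ}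
    {μ : Measure X} [IsFiniteMeasure μ] {μk : ι → Measure X} [∀ k, IsFiniteMeasure (μk k)]
    {s : X → EuclideanSpace ℝ (Fin d)} {sk : ι → X → EuclideanSpace ℝ (Fin d)}
    (hs : AEStronglyMeasurable s μ) (hsk : ∀ k, AEStronglyMeasurable (sk k) (μk k))
    (hs1 : ∀ᵐ x ∂μ, ‖s x‖ = 1) (hsk1 : ∀ k, ∀ᵐ x ∂(μk k), ‖sk k x‖ = 1)
    {φ : X → EuclideanSpace ℝ (Fin d)} (hφ : Continuous φ) (hφs : HasCompactSupport φ)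
    (h : ∀ i, Tendsto (fun k => ∫ x, φ x i * sk k x i ∂(μk k)) l (𝓝 (∫ x, φ x i * s x i ∂μ))) :
    Tendsto (fun k => ∫ x, ⟪φ x, sk k x⟫ ∂(μk k)) l (𝓝 (∫ x, ⟪φ x, s x⟫ ∂μ)) := by
  obtain ⟨B, hB⟩ := hφ.bounded_above_of_compact_support hφs
  refine .congr (fun k => (integral_inner_eq_sum_integral_mul hφ.aestronglyMeasurable hB (hsk k)
    ((hsk1 k).mono fun _ hx => hx.le)).symm) ?_
  rw [integral_inner_eq_sum_integral_mul hφ.aestronglyMeasurable hB hs (hs1.mono fun _ hx => hx.le)]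
  exact tendsto_finsetSum _ fun i _ => h i

theorem reshetnyak_continuity_general {n d : ℕ} (Ω : Set (EuclideanSpace ℝ (Fin n))) (hΩ : IsOpen Ω)
    (C : Set (Fin d → ℝ)) (hCclosed : IsClosed C)
    (g : (Fin d → ℝ) → ℝ) (hgcont : ContinuousOn g C)
    (ν : Measure (EuclideanSpace ℝ (Fin n))) (νk : ℕ → Measure (EuclideanSpace ℝ (Fin n)))
    [IsFiniteMeasure ν] (hνk : ∀ k, IsFiniteMeasure (νk k))
    (hνΩ : ν Ωᶜ = 0)
    (σ : EuclideanSpace ℝ (Fin n) → Fin d → ℝ)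
    (σk : ℕ → EuclideanSpace ℝ (Fin n) → Fin d → ℝ)
    (hσm : AEMeasurable σ ν) (hσkm : ∀ k, AEMeasurable (σk k) (νk k))
    (hσ : ∀ᵐ x ∂ν, σ x ∈ C ∧ ∑ i, σ x i ^ 2 = 1)
    (hσk : ∀ k, ∀ᵐ x ∂(νk k), σk k x ∈ C ∧ ∑ i, σk k x i ^ 2 = 1)
    (hweak : ∀ φ : EuclideanSpace ℝ (Fin n) → ℝ, Continuous φ → HasCompactSupport φ →
      tsupport φ ⊆ Ω → ∀ i : Fin d,
      Tendsto (fun k => ∫ x, φ x * σk k x i ∂(νk k)) atTop (nhds (∫ x, φ x * σ x i ∂ν)))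
    (hstrict : Tendsto (fun k => νk k Set.univ) atTop (nhds (ν Set.univ))) :
    Tendsto (fun k => ∫ x, g (σk k x) ∂(νk k)) atTop (nhds (∫ x, g (σ x) ∂ν)) := by
  have hcont : Continuous (WithLp.toLp 2 : (Fin d → ℝ) → EuclideanSpace ℝ (Fin d)) :=
    PiLp.continuous_toLp 2 _
  have hunit : ∀ v : Fin d → ℝ, v ∈ C ∧ ∑ i, v i ^ 2 = 1 → ‖WithLp.toLp 2 v‖ = 1 :=
    fun v hv => (EuclideanSpace.norm_toLp_eq_one_iff v).2 hv.2
  obtain ⟨G, hG, hGg⟩ := (hgcont.comp (PiLp.continuous_ofLp 2 _).continuousOn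
    (mapsTo_preimage _ _)).mono inter_subset_left |>.exists_continuous_eqOn
    ((hCclosed.preimage (PiLp.continuous_ofLp 2 _)).inter isClosed_sphere)
  have hgG : ∀ (μ : Measure (EuclideanSpace ℝ (Fin n))) (s : EuclideanSpace ℝ (Fin n) → Fin d → ℝ),
      (∀ᵐ x ∂μ, s x ∈ C ∧ ∑ i, s x i ^ 2 = 1) →
      ∫ x, g (s x) ∂μ = ∫ x, G (WithLp.toLp 2 (s x)) ∂μ := fun μ s hs =>
    integral_congr_ae <| hs.mono fun x hx =>
      (hGg ⟨hx.1, mem_sphere_zero_iff_norm.2 (hunit _ hx)⟩).symm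
  have hσ' : AEStronglyMeasurable (fun x => WithLp.toLp 2 (σ x)) ν :=
    hcont.comp_aestronglyMeasurable hσm.aestronglyMeasurable
  have hσk' : ∀ k, AEStronglyMeasurable (fun x => WithLp.toLp 2 (σk k x)) (νk k) :=
    fun k => hcont.comp_aestronglyMeasurable (hσkm k).aestronglyMeasurable
  have hσ1 : ∀ᵐ x ∂ν, ‖WithLp.toLp 2 (σ x)‖ = 1 := hσ.mono fun x => hunit _
  have hσk1 : ∀ k, ∀ᵐ x ∂(νk k), ‖WithLp.toLp 2 (σk k x)‖ = 1 :=
    fun k => (hσk k).mono fun x => hunit _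
  simp_rw [hgG ν σ hσ, hgG _ _ (hσk _)]
  refine tendsto_integral_comp_of_tendsto_integral_inner hΩ hνΩ hσ' hσk' hσ1 hσk1
    (fun φ hφ hφs hφΩ => ?_) hstrict hG
  exact tendsto_integral_inner_of_forall_apply hσ' hσk' hσ1 hσk1 hφ hφs fun i =>
    hweak _ ((EuclideanSpace.proj i).continuous.comp hφ) (hφs.comp_left rfl)
      ((tsupport_comp_subset rfl _).trans hφΩ) i

/-- Reshetnyak continuity (Theorem 3.1(2)). With measures encoded by polar decompositions
`μ_k = σ_k ν_k` taking values in a closed convex cone `C`, if `g : C → [0,∞)` is continuous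
and positively `1`-homogeneous and `μ_k → μ` strictly (weak-* convergence plus convergence
of the total masses `|μ_k|(Ω) → |μ|(Ω)`), then
`∫ g(dμ_k/d|μ_k|) d|μ_k| → ∫ g(dμ/d|μ|) d|μ|`. -/
theorem reshetnyak_continuity {n d : ℕ} (Ω : Set (EuclideanSpace ℝ (Fin n))) (hΩ : IsOpen Ω)
    (C : Set (Fin d → ℝ)) (hCclosed : IsClosed C) (hCconv : Convex ℝ C)
    (hCcone : ∀ r : ℝ, 0 ≤ r → ∀ x ∈ C, r • x ∈ C)
    (g : (Fin d → ℝ) → ℝ) (hgcont : ContinuousOn g C) (hgpos : ∀ x ∈ C, 0 ≤ g x)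
    (hghom : ∀ r : ℝ, 0 < r → ∀ x ∈ C, g (r • x) = r * g x)
    (ν : Measure (EuclideanSpace ℝ (Fin n))) (νk : ℕ → Measure (EuclideanSpace ℝ (Fin n)))
    [IsFiniteMeasure ν] (hνk : ∀ k, IsFiniteMeasure (νk k))
    (hνΩ : ν Ωᶜ = 0) (hνkΩ : ∀ k, νk k Ωᶜ = 0)
    (σ : EuclideanSpace ℝ (Fin n) → Fin d → ℝ)
    (σk : ℕ → EuclideanSpace ℝ (Fin n) → Fin d → ℝ)
    (hσm : AEMeasurable σ ν) (hσkm : ∀ k, AEMeasurable (σk k) (νk k))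
    (hσ : ∀ᵐ x ∂ν, σ x ∈ C ∧ ∑ i, σ x i ^ 2 = 1)
    (hσk : ∀ k, ∀ᵐ x ∂(νk k), σk k x ∈ C ∧ ∑ i, σk k x i ^ 2 = 1)
    (hweak : ∀ φ : EuclideanSpace ℝ (Fin n) → ℝ, Continuous φ → HasCompactSupport φ →
      tsupport φ ⊆ Ω → ∀ i : Fin d,
      Tendsto (fun k => ∫ x, φ x * σk k x i ∂(νk k)) atTop (nhds (∫ x, φ x * σ x i ∂ν)))
    (hstrict : Tendsto (fun k => νk k Set.univ) atTop (nhds (ν Set.univ))) :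
    Tendsto (fun k => ∫ x, g (σk k x) ∂(νk k)) atTop (nhds (∫ x, g (σ x) ∂ν)) :=
  reshetnyak_continuity_general Ω hΩ C hCclosed g hgcont ν νk hνk hνΩ σ σk hσm hσkm hσ hσk hweak
    hstrict
end

section
/- The trace-free symmetric gradient E^D u := (1/2)(∇u + (∇u)^T) − (1/n) div(u) I_n, viewed as a first-order operator from ℝ^n-valued maps on ℝ^n to n×n matrices, is C-elliptic for every n ≥ 3, i.e., its complexified symbol ξ ↦ (1/2)(v ξ^T + ξ v^T) − (1/n)⟨v, ξ⟩ I_n is injective in v ∈ ℂ^n for every ξ ∈ ℂ^n \ {0}; for n = 2 it is not C-elliptic. -/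
/-!
If the symbol vanishes at `v`, then `v ξᵀ + ξ vᵀ` is a scalar multiple of the identity. This
matrix has rank at most `2`, so for `n ≥ 3` the scalar is `0`; and `v ξᵀ + ξ vᵀ = 0` with `ξ ≠ 0`
forces `v = 0`. For `n = 2` the isotropic frequency `ξ = (1, i)` has the null vector `(1, -i)`.
-/

open Finset

/-- The complexified symbol of the trace-free symmetric gradient `E^D`:
`ξ ↦ (1/2)(v ξᵀ + ξ vᵀ) − (1/n)⟨v,ξ⟩ Iₙ`. -/
noncomputable def devSymSymbol (n : ℕ) (ξ v : Fin n → ℂ) : Matrix (Fin n) (Fin n) ℂ :=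
  fun i j => (v i * ξ j + ξ i * v j) / 2 -
    if i = j then (∑ k, v k * ξ k) / (n : ℂ) else 0

open Matrix

namespace Matrix

theorem rank_add_le {K m n : Type*} [Field K] [Fintype n] (A B : Matrix m n K) :
    (A + B).rank ≤ A.rank + B.rank := by
  rw [rank, rank, rank, mulVecLin_add]
  exact (Submodule.finrank_mono (LinearMap.range_add_le _ _)).trans
    (Submodule.finrank_add_le_finrank_add_finrank _ _)

theorem rank_smul_one {K n : Type*} [Field K] [Fintype n] [DecidableEq n] {c : K} (hc : c ≠ 0) :
    (c • (1 : Matrix n n K)).rank = Fintype.card n := by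
  rw [rank_smul_of_mem_nonZeroDivisors _ (mem_nonZeroDivisors_of_ne_zero hc), rank_one]

end Matrix

section SymmetrizedOuterProduct

variable {ι K : Type*} [Field K]

theorem eq_zero_of_vecMulVec_add_vecMulVec_eq_smul_one [Fintype ι] [DecidableEq ι]
    (hι : 3 ≤ Fintype.card ι) {u ξ : ι → K} {c : K}
    (h : vecMulVec u ξ + vecMulVec ξ u = c • 1) : c = 0 := by
  by_contra hc
  have hcard : Fintype.card ι ≤ (vecMulVec u ξ).rank + (vecMulVec ξ u).rank :=
    (rank_smul_one hc).symm.trans_le (h ▸ rank_add_le _ _)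
  have := add_le_add (rank_vecMulVec_le u ξ) (rank_vecMulVec_le ξ u)
  omega

theorem eq_zero_of_vecMulVec_add_vecMulVec_eq_zero [NeZero (2 : K)] {u ξ : ι → K} (hξ : ξ ≠ 0)
    (h : vecMulVec u ξ + vecMulVec ξ u = 0) : u = 0 := by
  obtain ⟨i, hi⟩ : ∃ i, ξ i ≠ 0 := Function.ne_iff.mp hξ
  have hrow : ∀ j, u i * ξ j + ξ i * u j = 0 := fun j => by
    simpa [vecMulVec_apply] using congr_fun₂ h i j
  have hui : u i = 0 := by
    have : 2 * u i * ξ i = 0 := by linear_combination hrow i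
    simpa [hi, two_ne_zero] using this
  funext j
  simpa [hui, hi] using hrow j

end SymmetrizedOuterProduct

noncomputable def devSymSymbolLinearMap (n : ℕ) (ξ : Fin n → ℂ) :
    (Fin n → ℂ) →ₗ[ℂ] Matrix (Fin n) (Fin n) ℂ where
  toFun := devSymSymbol n ξ
  map_add' v w := by
    ext i j
    simp only [devSymSymbol, Pi.add_apply, Matrix.add_apply, add_mul, sum_add_distrib]
    split_ifs <;> ring
  map_smul' a v := by
    ext i j
    simp only [devSymSymbol, Pi.smul_apply, Matrix.smul_apply, smul_eq_mul, RingHom.id_apply,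
      mul_assoc, ← mul_sum]
    split_ifs <;> ring

theorem vecMulVec_add_vecMulVec_eq_smul_one_of_devSymSymbol_eq_zero {n : ℕ} {ξ v : Fin n → ℂ}
    (h : devSymSymbol n ξ v = 0) :
    vecMulVec v ξ + vecMulVec ξ v = (2 * (∑ k, v k * ξ k) / n) • 1 := by
  ext i j
  have hij := congr_fun₂ h i j
  simp only [devSymSymbol, Matrix.zero_apply, sub_eq_zero] at hij
  simp only [Matrix.add_apply, vecMulVec_apply, Matrix.smul_apply, one_apply, smul_eq_mul]
  split_ifs at hij ⊢ <;> linear_combination 2 * hij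

theorem devSymSymbol_two_one_I_one_neg_I :
    devSymSymbol 2 ![1, Complex.I] ![1, -Complex.I] = 0 := by
  ext i j
  fin_cases i <;> fin_cases j <;> simp [devSymSymbol, Fin.sum_univ_two]

/-- The trace-free symmetric gradient is `ℂ`-elliptic for every `n ≥ 3` (its complexified
symbol is injective for every `ξ ≠ 0`), but not for `n = 2`. -/
theorem devSymmetricGradient_CElliptic_iff :
    (∀ n : ℕ, 3 ≤ n → ∀ ξ : Fin n → ℂ, ξ ≠ 0 →
      Function.Injective (fun v : Fin n → ℂ => devSymSymbol n ξ v)) ∧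
    ¬ (∀ ξ : Fin 2 → ℂ, ξ ≠ 0 →
      Function.Injective (fun v : Fin 2 → ℂ => devSymSymbol 2 ξ v)) := by
  refine ⟨fun n hn ξ hξ => ?_, fun h => ?_⟩
  · refine (injective_iff_map_eq_zero (devSymSymbolLinearMap n ξ)).mpr fun v hv => ?_
    have hsym := vecMulVec_add_vecMulVec_eq_smul_one_of_devSymSymbol_eq_zero hv
    rw [eq_zero_of_vecMulVec_add_vecMulVec_eq_smul_one (by simpa using hn) hsym,
      zero_smul] at hsym
    exact eq_zero_of_vecMulVec_add_vecMulVec_eq_zero hξ hsym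
  · have hkernel := devSymSymbol_two_one_I_one_neg_I.trans
      (map_zero (devSymSymbolLinearMap 2 ![1, Complex.I])).symm
    simpa using congr_fun (h ![1, Complex.I] (by simp) hkernel) 0
end
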